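/- arXiv:2210.10575 — 11 statements merged into one kernel-verified Lean document; each statement's English description precedes it below -/
import Mathlib

section
/- Let m ≥ 2 and let a : Fin m → ℂ[X] be an injective family of nonzero polynomials such that a i * a j + 4 is a square in ℂ[X] whenever i ≠ j, and such that at least one a i is nonconstant. Then at most one of the polynomials a i is constant: for all indices i, j, if deg(a i) = 0 and deg(a j) = 0 then i = j. -/
/-!
If `c ≠ d` are nonzero constants and `c p + r = u²`, `d p + r = v²` with `r ≠ 0`, then
`(√d u)² - (√c v)² = r (d - c)` is a nonzero constant. Both factors `√d u ∓ √c v` are then units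
of `K[X]`, hence constants, so `u` is constant and therefore so is `p`. A D(4)-tuple containing two
constants thus has no nonconstant member.
-/

open Polynomial

namespace Polynomial

variable {K : Type*} [Field K]

theorem natDegree_eq_zero_of_mul_self_sub_mul_self_eq_C [NeZero (2 : K)] {x y : K[X]} {t : K}
    (ht : t ≠ 0) (h : x * x - y * y = C t) : x.natDegree = 0 := by
  have hunit : IsUnit ((x + y) * (x - y)) := by
    rw [← mul_self_sub_mul_self, h]
    exact isUnit_C.mpr ht.isUnit
  have hadd := natDegree_eq_zero_of_isUnit (isUnit_of_mul_isUnit_left hunit)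
  have hsub := natDegree_eq_zero_of_isUnit (isUnit_of_mul_isUnit_right hunit)
  have hsum : (C 2 * x).natDegree = 0 := by
    have : C 2 * x = (x - y) + (x + y) := by rw [C_ofNat]; ring
    rw [this]
    exact Nat.le_zero.mp ((natDegree_add_le _ _).trans (by omega))
  rwa [natDegree_C_mul two_ne_zero] at hsum

theorem natDegree_eq_zero_of_isSquare_C_mul_add_C [IsAlgClosed K] [NeZero (2 : K)] {p : K[X]}
    {c d r : K} (hc : c ≠ 0) (hd : d ≠ 0) (hcd : c ≠ d) (hr : r ≠ 0)
    (hcp : IsSquare (C c * p + C r)) (hdp : IsSquare (C d * p + C r)) : p.natDegree = 0 := by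
  obtain ⟨u, hu⟩ := hcp
  obtain ⟨v, hv⟩ := hdp
  obtain ⟨e, he⟩ := IsAlgClosed.exists_pow_nat_eq d two_pos
  obtain ⟨f, hf⟩ := IsAlgClosed.exists_pow_nat_eq c two_pos
  have hdiff : C e * u * (C e * u) - C f * v * (C f * v) = C (r * (d - c)) := by
    have hCe : C e * C e = C d := by rw [← C_mul, ← sq, he]
    have hCf : C f * C f = C c := by rw [← C_mul, ← sq, hf]
    simp only [C_mul, C_sub]
    linear_combination (u * u) * hCe - (v * v) * hCf - C d * hu + C c * hv
  have heu := natDegree_eq_zero_of_mul_self_sub_mul_self_eq_C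
    (mul_ne_zero hr (sub_ne_zero.mpr hcd.symm)) hdiff
  have he0 : e ≠ 0 := by rintro rfl; exact hd (by rw [← he]; ring)
  rw [natDegree_C_mul he0] at heu
  have hsq : (C c * p + C r).natDegree = 0 := by
    rw [hu]
    exact Nat.le_zero.mp (natDegree_mul_le.trans (by omega))
  rwa [natDegree_add_C, natDegree_C_mul hc] at hsq

end Polynomial

theorem at_most_one_constant_in_D4_tuple_complex_general
    (m : ℕ) (a : Fin m → ℂ[X])
    (hinj : Function.Injective a)
    (hne : ∀ i, a i ≠ 0)
    (hsq : ∀ i j, i ≠ j → IsSquare (a i * a j + 4))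
    (hnonconst : ∃ i, 0 < (a i).natDegree) :
    ∀ i j, (a i).natDegree = 0 → (a j).natDegree = 0 → i = j := by
  intro i j hi hj
  by_contra hij
  obtain ⟨k, hk⟩ := hnonconst
  have hik : i ≠ k := by rintro rfl; omega
  have hjk : j ≠ k := by rintro rfl; omega
  have hai := eq_C_of_natDegree_eq_zero hi
  have haj := eq_C_of_natDegree_eq_zero hj
  refine hk.ne' (natDegree_eq_zero_of_isSquare_C_mul_add_C (c := (a i).coeff 0)
    (d := (a j).coeff 0) (r := 4) ?_ ?_ ?_ (by norm_num) ?_ ?_)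
  · exact fun h ↦ hne i (by rw [hai, h, C_0])
  · exact fun h ↦ hne j (by rw [haj, h, C_0])
  · exact fun h ↦ hij (hinj (by rw [hai, haj, h]))
  · simpa only [← hai, C_ofNat] using hsq i k hik
  · simpa only [← haj, C_ofNat] using hsq j k hjk

/-- In a D(4)-m-tuple of complex polynomials, not all constant,
at most one element is a constant polynomial. -/
theorem at_most_one_constant_in_D4_tuple_complex
    (m : ℕ) (hm : 2 ≤ m) (a : Fin m → ℂ[X])
    (hinj : Function.Injective a)
    (hne : ∀ i, a i ≠ 0)
    (hsq : ∀ i j, i ≠ j → IsSquare (a i * a j + 4))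
    (hnonconst : ∃ i, 0 < (a i).natDegree) :
    ∀ i j, (a i).natDegree = 0 → (a j).natDegree = 0 → i = j :=
  at_most_one_constant_in_D4_tuple_complex_general m a hinj hne hsq hnonconst
end

section
/- Let d ∈ ℤ[i][X] and x, y, z ∈ ℤ[i][X] satisfy a*d + 4 = x^2, b*d + 4 = y^2 and c*d + 4 = z^2. Then: (1) there exist z0, x0 ∈ ℤ[i][X] with a*z0^2 − c*x0^2 = 4*(a − c), 4*deg(z0) ≤ 3γ − α and 4*deg(x0) ≤ α + γ, there exists d0 ∈ ℤ[i][X] with c*d0 + 4 = z0^2 and a*d0 + 4 = x0^2, and there exist a nonnegative integer m and a sequence (v_k)_{k≥0} in ℤ[i][X] with v_0 = z0, 2*v_1 = s*z0 + c*x0 and v_{k+2} = s*v_{k+1} − v_k for all k, such that z = v_m; (2) there exist z1, y1 ∈ ℤ[i][X] with b*z1^2 − c*y1^2 = 4*(b − c), 4*deg(z1) ≤ 3γ − β and 4*deg(y1) ≤ β + γ, there exists d1 ∈ ℤ[i][X] with c*d1 + 4 = z1^2 and b*d1 + 4 = y1^2, and there exist a nonnegative integer n and a sequence (w_k)_{k≥0}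 in ℤ[i][X] with w_0 = z1, 2*w_1 = t*z1 + c*y1 and w_{k+2} = t*w_{k+1} − w_k for all k, such that z = w_n. -/
/-!
The solutions `(z, x)` of `A z² - K x² = 4 (A - K)` that come from some `d` are permuted by
`(z, x) ↦ ((S z + K x) / 2, (S x + A z) / 2)` and its inverse; the divisions by `2` are exact in
`ℤ[i][X]` because `2` is, up to a unit, the square of the prime `1 + i`. The two neighbours of `z`
have sum `S z` and product `K (d + A - K) + 4`, so as long as `4 deg z + deg A > 3 deg K` one of
them has smaller degree. Descending on `deg z` reaches a solution `(z₀, x₀)` of small degree, and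
`z` is a term of the two-sided sequence `V (k + 2) = S V (k + 1) - V k` through it; a negative
index is made positive by replacing `x₀` with `-x₀`, which reverses the sequence.
-/

open Polynomial

theorem Zsqrtd.irreducible_of_natAbs_norm_prime {d : ℤ} {x : ℤ√d} (hx : x.norm.natAbs.Prime) :
    Irreducible x := by
  refine ⟨fun hu => hx.ne_one (Zsqrtd.norm_eq_one_iff.mpr hu), fun y z hyz => ?_⟩
  have hnorm : y.norm.natAbs * z.norm.natAbs = x.norm.natAbs := by
    rw [hyz, Zsqrtd.norm_mul, Int.natAbs_mul]
  rcases Nat.prime_mul_iff.mp (hnorm ▸ hx) with ⟨-, hz⟩ | ⟨-, hy⟩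
  · exact Or.inr (Zsqrtd.norm_eq_one_iff.mp hz)
  · exact Or.inl (Zsqrtd.norm_eq_one_iff.mp hy)

theorem Prime.sq_dvd_of_sq_eq {R : Type*} [CommRing R] [IsDomain R] {p u v w : R} (hp : Prime p)
    (h : u ^ 2 = p ^ 4 * w + p ^ 2 * v * u) : p ^ 2 ∣ u := by
  obtain ⟨g, rfl⟩ : p ∣ u :=
    hp.dvd_of_dvd_pow (n := 2) ⟨p ^ 3 * w + p * v * u, by rw [h]; ring⟩
  have hg : g ^ 2 = p ^ 2 * w + p * v * g :=
    mul_left_cancel₀ (pow_ne_zero 2 hp.ne_zero) (by linear_combination h)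
  obtain ⟨k, rfl⟩ : p ∣ g := hp.dvd_of_dvd_pow (n := 2) ⟨p * w + v * g, by rw [hg]; ring⟩
  exact ⟨k, by ring⟩

theorem two_dvd_of_sq_eq_four_mul_add_two_mul {u v w : GaussianInt[X]}
    (h : u ^ 2 = 4 * w + 2 * v * u) : 2 ∣ u := by
  let π : GaussianInt[X] := C ⟨1, 1⟩
  let ι : GaussianInt[X] := C ⟨0, -1⟩
  have hπ : Prime π := prime_C_iff.mpr (Zsqrtd.irreducible_of_natAbs_norm_prime (by decide)).prime
  have htwo : 2 = π ^ 2 * ι := by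
    rw [← C_pow, ← C_mul, show ((⟨1, 1⟩ : GaussianInt) ^ 2 * ⟨0, -1⟩) = 2 by decide, map_ofNat]
  have hι : ι ^ 2 = -1 := by
    rw [← C_pow, show ((⟨0, -1⟩ : GaussianInt)) ^ 2 = -1 by decide, map_neg, map_one]
  obtain ⟨k, hk⟩ := hπ.sq_dvd_of_sq_eq (u := u) (w := -w) (v := ι * v)
    (by linear_combination h + ((2 + π ^ 2 * ι) * w + v * u) * htwo + π ^ 4 * w * hι)
  exact ⟨-(ι * k), by linear_combination hk + ι * k * htwo + π ^ 2 * k * hι⟩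

namespace Polynomial

variable {R : Type*} [CommRing R] [IsDomain R]

theorem two_mul_natDegree_eq_of_add_four_eq_sq {p z : R[X]} (h : p + 4 = z ^ 2) :
    2 * z.natDegree = p.natDegree := by
  rw [← natDegree_pow, ← h, ← map_ofNat C 4, natDegree_add_C]

theorem natDegree_lt_or_natDegree_lt_of_natDegree_mul_lt {p q : R[X]} {m : ℕ} (hm : 0 < m)
    (h : (p * q).natDegree < (p + q).natDegree + m) : p.natDegree < m ∨ q.natDegree < m := by
  by_cases hp : p = 0
  · simp [hp, hm]
  by_cases hq : q = 0
  · simp [hq, hm]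
  rw [natDegree_mul hp hq] at h
  have := natDegree_add_le p q
  omega

end Polynomial

section OrbitSeq

variable {R : Type*} [CommRing R]

/-- `V k` is the `z`-coordinate of the `k`-th image of `(z₀, x₀)` under
`(z, x) ↦ ((S z + K x) / 2, (S x + A z) / 2)`. -/
structure IsOrbitSeq (K S z₀ x₀ : R) (V : ℤ → R) : Prop where
  apply_add_two : ∀ k, V (k + 2) = S * V (k + 1) - V k
  apply_zero : V 0 = z₀
  two_mul_apply_one : 2 * V 1 = S * z₀ + K * x₀

theorem exists_isOrbitSeq {K S z₀ x₀ z₁ : R} (h : 2 * z₁ = S * z₀ + K * x₀) :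
    ∃ V, IsOrbitSeq K S z₀ x₀ V := by
  refine ⟨fun k => z₁ * (Chebyshev.S R (k - 1)).eval S - z₀ * (Chebyshev.S R (k - 2)).eval S,
    ⟨fun k => ?_, by simp, by simpa using h⟩⟩
  have h₁ := congrArg (eval S) (Chebyshev.S_add_one R k)
  have h₂ := congrArg (eval S) (Chebyshev.S_eq R k)
  simp only [eval_sub, eval_mul, eval_X] at h₁ h₂
  simp only [show k + 2 - 1 = k + 1 by ring, show k + 2 - 2 = k by ring, add_sub_cancel_right,
    show k + 1 - 2 = k - 1 by ring]
  linear_combination z₁ * h₁ - z₀ * h₂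

theorem IsOrbitSeq.comp_neg {K S z₀ x₀ : R} {V : ℤ → R} (hV : IsOrbitSeq K S z₀ x₀ V) :
    IsOrbitSeq K S z₀ (-x₀) (fun k => V (-k)) where
  apply_add_two k := by
    have := hV.apply_add_two (-(k + 2))
    simp only [show -(k + 2) + 2 = -k by ring, show -(k + 2) + 1 = -(k + 1) by ring] at this
    linear_combination this
  apply_zero := by simpa using hV.apply_zero
  two_mul_apply_one := by
    have := hV.apply_add_two (-1)
    norm_num at this
    linear_combination 2 * this - hV.two_mul_apply_one + 2 * S * hV.apply_zero

end OrbitSeq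

section Pell

variable {A K S d z x z' : GaussianInt[X]}

theorem exists_two_mul_eq_add (hS : A * K + 4 = S ^ 2) (hz : K * d + 4 = z ^ 2)
    (hx : A * d + 4 = x ^ 2) : ∃ z', 2 * z' = S * z + K * x := by
  obtain ⟨z', h⟩ : 2 ∣ S * z + K * x := two_dvd_of_sq_eq_four_mul_add_two_mul
    (v := K * x) (w := z ^ 2 + K * (A - K))
    (by linear_combination (-(z ^ 2)) * hS - A * K * hz + K ^ 2 * hx)
  exact ⟨z', h.symm⟩

/-- The witness is `x' = -(S x + A z) / 2`; with this sign the relation between `(z, x)` and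
`(z', x')` is symmetric. -/
theorem exists_neighbour (hS : A * K + 4 = S ^ 2) (hz : K * d + 4 = z ^ 2)
    (hx : A * d + 4 = x ^ 2) (hz' : 2 * z' = S * z + K * x) :
    ∃ x' d', K * d' + 4 = z' ^ 2 ∧ A * d' + 4 = x' ^ 2 ∧ 2 * z = S * z' + K * x' := by
  obtain ⟨y, hy⟩ : 2 ∣ S * x + A * z := two_dvd_of_sq_eq_four_mul_add_two_mul
    (v := A * z) (w := x ^ 2 - A * (A - K))
    (by linear_combination (-(x ^ 2)) * hS - A * K * hx + A ^ 2 * hz)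
  obtain ⟨q, hq⟩ : 2 ∣ S * z * x + A * K * d := two_dvd_of_sq_eq_four_mul_add_two_mul
    (v := A * K * d)
    (w := A * K ^ 2 * d + A ^ 2 * K * d + A * K * d ^ 2 + 4 * A * K + 4 * K * d + 4 * A * d + 16)
    (by linear_combination (-(z ^ 2 * x ^ 2)) * hS + (-16 - 4 * A * d - A * K * x ^ 2) * hz
      + (-(4 * z ^ 2) - 4 * A * K - A * K ^ 2 * d) * hx)
  refine ⟨-y, A + d + K + q, mul_left_cancel₀ (by norm_num : (4 : GaussianInt[X]) ≠ 0) ?_,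
    mul_left_cancel₀ (by norm_num : (4 : GaussianInt[X]) ≠ 0) ?_,
    mul_left_cancel₀ (two_ne_zero : (2 : GaussianInt[X]) ≠ 0) ?_⟩
  · linear_combination -(2 * z' + S * z + K * x) * hz' - 2 * K * hq + z ^ 2 * hS
      + (4 + A * K) * hz + K ^ 2 * hx
  · linear_combination (2 * y + S * x + A * z) * hy - 2 * A * hq + x ^ 2 * hS
      + (4 + A * K) * hx + A ^ 2 * hz
  · linear_combination -S * hz' - K * hy + z * hS

theorem natDegree_lt_or_natDegree_lt_of_large {z'' : GaussianInt[X]} (hS : A * K + 4 = S ^ 2)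
    (hA : A ≠ 0) (hAK : A.natDegree ≤ K.natDegree) (hK : 0 < K.natDegree)
    (hz : K * d + 4 = z ^ 2) (hx : A * d + 4 = x ^ 2)
    (hlarge : 3 * K.natDegree < 4 * z.natDegree + A.natDegree)
    (hz' : 2 * z' = S * z + K * x) (hz'' : 2 * z'' = S * z - K * x) :
    z'.natDegree < z.natDegree ∨ z''.natDegree < z.natDegree := by
  have hsum : z' + z'' = S * z := mul_left_cancel₀ two_ne_zero (by linear_combination hz' + hz'')
  have hprod : z' * z'' = K * (d + A - K) + 4 :=
    mul_left_cancel₀ (by norm_num : (4 : GaussianInt[X]) ≠ 0) (by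
      linear_combination 2 * z'' * hz' + (S * z + K * x) * hz'' - z ^ 2 * hS - (A * K + 4) * hz
        + K ^ 2 * hx)
  have hK0 : K ≠ 0 := ne_zero_of_natDegree_gt hK
  have hdz := two_mul_natDegree_eq_of_add_four_eq_sq hz
  have hd : d ≠ 0 := by
    rintro rfl
    simp only [mul_zero, natDegree_zero] at hdz
    omega
  rw [natDegree_mul hK0 hd] at hdz
  have hdS := two_mul_natDegree_eq_of_add_four_eq_sq hS
  rw [natDegree_mul hA hK0] at hdS
  have hdeg : (K * (d + A - K) + 4).natDegree ≤ K.natDegree + max d.natDegree K.natDegree := by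
    rw [← map_ofNat C 4, natDegree_add_C]
    have := natDegree_sub_le (d + A) K
    have := natDegree_add_le d A
    have := natDegree_mul_le (p := K) (q := d + A - K)
    omega
  apply natDegree_lt_or_natDegree_lt_of_natDegree_mul_lt (by omega)
  rw [hsum, hprod, natDegree_mul (ne_zero_of_natDegree_gt (n := 0) (by omega))
    (ne_zero_of_natDegree_gt (n := 0) (by omega))]
  omega

theorem four_mul_natDegree_le_of_small (hK : K ≠ 0) (hz : K * d + 4 = z ^ 2)
    (hx : A * d + 4 = x ^ 2) (hsmall : 4 * z.natDegree + A.natDegree ≤ 3 * K.natDegree) :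
    4 * x.natDegree ≤ A.natDegree + K.natDegree := by
  have hdz := two_mul_natDegree_eq_of_add_four_eq_sq hz
  have hdx := two_mul_natDegree_eq_of_add_four_eq_sq hx
  by_cases hd : d = 0
  · simp only [hd, mul_zero, natDegree_zero] at hdx
    omega
  rw [natDegree_mul hK hd] at hdz
  have := natDegree_mul_le (p := A) (q := d)
  omega

def IsSmallOrbitSeq (A K S : GaussianInt[X]) (V : ℤ → GaussianInt[X]) : Prop :=
  ∃ z₀ x₀ d₀ : GaussianInt[X], K * d₀ + 4 = z₀ ^ 2 ∧ A * d₀ + 4 = x₀ ^ 2 ∧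
    4 * z₀.natDegree + A.natDegree ≤ 3 * K.natDegree ∧
    4 * x₀.natDegree ≤ A.natDegree + K.natDegree ∧ IsOrbitSeq K S z₀ x₀ V

theorem IsSmallOrbitSeq.comp_neg {V : ℤ → GaussianInt[X]} (hV : IsSmallOrbitSeq A K S V) :
    IsSmallOrbitSeq A K S (fun k => V (-k)) := by
  obtain ⟨z₀, x₀, d₀, hz₀, hx₀, hdz₀, hdx₀, hV⟩ := hV
  exact ⟨z₀, -x₀, d₀, hz₀, by rwa [neg_sq], hdz₀, by rwa [natDegree_neg], hV.comp_neg⟩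

def OnSmallOrbit (A K S z z' : GaussianInt[X]) : Prop :=
  ∃ V, IsSmallOrbitSeq A K S V ∧ ∃ m, V m = z ∧ V (m + 1) = z'

theorem OnSmallOrbit.shift (h : OnSmallOrbit A K S z' z) : OnSmallOrbit A K S z (S * z - z') := by
  obtain ⟨V, hV, m, hm, hm₁⟩ := h
  refine ⟨V, hV, m + 1, hm₁, ?_⟩
  obtain ⟨_, _, _, _, _, _, _, hrec⟩ := hV
  rw [add_assoc, one_add_one_eq_two, hrec.apply_add_two, hm, hm₁]

theorem OnSmallOrbit.symm (h : OnSmallOrbit A K S z z') : OnSmallOrbit A K S z' z := by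
  obtain ⟨V, hV, m, hm, hm₁⟩ := h
  exact ⟨_, hV.comp_neg, -(m + 1), by simpa using hm₁, by simpa using hm⟩

theorem OnSmallOrbit.exists_nat (h : OnSmallOrbit A K S z z') :
    ∃ V, IsSmallOrbitSeq A K S V ∧ ∃ n : ℕ, V n = z := by
  obtain ⟨V, hV, m, hm, -⟩ := h
  rcases le_or_gt 0 m with hm₀ | hm₀
  · exact ⟨V, hV, m.toNat, by rwa [Int.toNat_of_nonneg hm₀]⟩
  · refine ⟨_, hV.comp_neg, (-m).toNat, ?_⟩
    simpa [Int.toNat_of_nonneg (neg_nonneg.mpr hm₀.le)]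

end Pell

theorem onSmallOrbit {A K S d z x z' : GaussianInt[X]} (hS : A * K + 4 = S ^ 2) (hA : A ≠ 0)
    (hAK : A.natDegree ≤ K.natDegree) (hK : 0 < K.natDegree) (hz : K * d + 4 = z ^ 2)
    (hx : A * d + 4 = x ^ 2) (hz' : 2 * z' = S * z + K * x) : OnSmallOrbit A K S z z' := by
  by_cases hsmall : 4 * z.natDegree + A.natDegree ≤ 3 * K.natDegree
  · obtain ⟨V, hV⟩ := exists_isOrbitSeq hz'
    refine ⟨V, ⟨z, x, d, hz, hx, hsmall,
      four_mul_natDegree_le_of_small (ne_zero_of_natDegree_gt hK) hz hx hsmall, hV⟩, 0,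
      hV.apply_zero, ?_⟩
    rw [zero_add]
    exact mul_left_cancel₀ two_ne_zero (hV.two_mul_apply_one.trans hz'.symm)
  have hx_neg : A * d + 4 = (-x) ^ 2 := by rwa [neg_sq]
  obtain ⟨z'', hz''⟩ := exists_two_mul_eq_add hS hz hx_neg
  have hsum : z' + z'' = S * z := mul_left_cancel₀ two_ne_zero (by linear_combination hz' + hz'')
  rcases natDegree_lt_or_natDegree_lt_of_large (z'' := z'') hS hA hAK hK hz hx (by omega) hz'
      (by linear_combination hz'') with hlt | hlt
  · obtain ⟨x', d', hz₁, hx₁, h₁⟩ := exists_neighbour hS hz hx hz'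
    exact (onSmallOrbit hS hA hAK hK hz₁ hx₁ h₁).symm
  · obtain ⟨x'', d'', hz₂, hx₂, h₂⟩ := exists_neighbour hS hz hx_neg hz''
    rw [eq_sub_of_add_eq hsum]
    exact (onSmallOrbit hS hA hAK hK hz₂ hx₂ h₂).shift
termination_by z.natDegree

theorem exists_small_solution_recurrence {A K S d z x : GaussianInt[X]} (hS : A * K + 4 = S ^ 2)
    (hA : A ≠ 0) (hAK : A.natDegree ≤ K.natDegree) (hK : 0 < K.natDegree)
    (hz : K * d + 4 = z ^ 2) (hx : A * d + 4 = x ^ 2) :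
    ∃ z₀ x₀ : GaussianInt[X],
      A * z₀ ^ 2 - K * x₀ ^ 2 = 4 * (A - K) ∧
      4 * z₀.natDegree + A.natDegree ≤ 3 * K.natDegree ∧
      4 * x₀.natDegree ≤ A.natDegree + K.natDegree ∧
      (∃ d₀ : GaussianInt[X], K * d₀ + 4 = z₀ ^ 2 ∧ A * d₀ + 4 = x₀ ^ 2) ∧
      (∃ (m : ℕ) (v : ℕ → GaussianInt[X]),
        v 0 = z₀ ∧ 2 * v 1 = S * z₀ + K * x₀ ∧
        (∀ k, v (k + 2) = S * v (k + 1) - v k) ∧ z = v m) := by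
  obtain ⟨z', hz'⟩ := exists_two_mul_eq_add hS hz hx
  obtain ⟨V, ⟨z₀, x₀, d₀, hz₀, hx₀, hdz₀, hdx₀, hV⟩, n, hn⟩ :=
    (onSmallOrbit hS hA hAK hK hz hx hz').exists_nat
  refine ⟨z₀, x₀, by linear_combination K * hx₀ - A * hz₀, hdz₀, hdx₀, ⟨d₀, hz₀, hx₀⟩, n, fun k => V k, hV.apply_zero, hV.two_mul_apply_one, fun k => ?_, hn.symm⟩
  simpa using hV.apply_add_two k

theorem pellian_solutions_from_recurrences_general
    (a b c s t : GaussianInt[X])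
    (ha : a ≠ 0) (hb : b ≠ 0)
    (hs : a * c + 4 = s ^ 2) (ht : b * c + 4 = t ^ 2)
    (hαβ : a.natDegree ≤ b.natDegree) (hβγ : b.natDegree ≤ c.natDegree)
    (hγ : 0 < c.natDegree)
    (d x y z : GaussianInt[X])
    (hx : a * d + 4 = x ^ 2) (hy : b * d + 4 = y ^ 2) (hz : c * d + 4 = z ^ 2) :
    (∃ z0 x0 : GaussianInt[X],
      a * z0 ^ 2 - c * x0 ^ 2 = 4 * (a - c) ∧
      4 * z0.natDegree + a.natDegree ≤ 3 * c.natDegree ∧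
      4 * x0.natDegree ≤ a.natDegree + c.natDegree ∧
      (∃ d0 : GaussianInt[X], c * d0 + 4 = z0 ^ 2 ∧ a * d0 + 4 = x0 ^ 2) ∧
      (∃ (m : ℕ) (v : ℕ → GaussianInt[X]),
        v 0 = z0 ∧ 2 * v 1 = s * z0 + c * x0 ∧
        (∀ k, v (k + 2) = s * v (k + 1) - v k) ∧ z = v m)) ∧
    (∃ z1 y1 : GaussianInt[X],
      b * z1 ^ 2 - c * y1 ^ 2 = 4 * (b - c) ∧
      4 * z1.natDegree + b.natDegree ≤ 3 * c.natDegree ∧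
      4 * y1.natDegree ≤ b.natDegree + c.natDegree ∧
      (∃ d1 : GaussianInt[X], c * d1 + 4 = z1 ^ 2 ∧ b * d1 + 4 = y1 ^ 2) ∧
      (∃ (n : ℕ) (w : ℕ → GaussianInt[X]),
        w 0 = z1 ∧ 2 * w 1 = t * z1 + c * y1 ∧
        (∀ k, w (k + 2) = t * w (k + 1) - w k) ∧ z = w n)) :=
  ⟨exists_small_solution_recurrence hs ha (hαβ.trans hβγ) hγ hz hx,
    exists_small_solution_recurrence ht hb hβγ hγ hz hy⟩

/-- Solutions of the Pellian equations attached to a D(4)-triple in ℤ[i][X]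
come from binary recurrence sequences with small initial terms. -/
theorem pellian_solutions_from_recurrences
    (a b c r s t : GaussianInt[X])
    (ha : a ≠ 0) (hb : b ≠ 0) (hc : c ≠ 0)
    (hab : a ≠ b) (hac : a ≠ c) (hbc : b ≠ c)
    (hr : a * b + 4 = r ^ 2) (hs : a * c + 4 = s ^ 2) (ht : b * c + 4 = t ^ 2)
    (hαβ : a.natDegree ≤ b.natDegree) (hβγ : b.natDegree ≤ c.natDegree)
    (hβ : 0 < b.natDegree) (hγ : 0 < c.natDegree)
    (d x y z : GaussianInt[X])
    (hx : a * d + 4 = x ^ 2) (hy : b * d + 4 = y ^ 2) (hz : c * d + 4 = z ^ 2) :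
    (∃ z0 x0 : GaussianInt[X],
      a * z0 ^ 2 - c * x0 ^ 2 = 4 * (a - c) ∧
      4 * z0.natDegree + a.natDegree ≤ 3 * c.natDegree ∧
      4 * x0.natDegree ≤ a.natDegree + c.natDegree ∧
      (∃ d0 : GaussianInt[X], c * d0 + 4 = z0 ^ 2 ∧ a * d0 + 4 = x0 ^ 2) ∧
      (∃ (m : ℕ) (v : ℕ → GaussianInt[X]),
        v 0 = z0 ∧ 2 * v 1 = s * z0 + c * x0 ∧
        (∀ k, v (k + 2) = s * v (k + 1) - v k) ∧ z = v m)) ∧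
    (∃ z1 y1 : GaussianInt[X],
      b * z1 ^ 2 - c * y1 ^ 2 = 4 * (b - c) ∧
      4 * z1.natDegree + b.natDegree ≤ 3 * c.natDegree ∧
      4 * y1.natDegree ≤ b.natDegree + c.natDegree ∧
      (∃ d1 : GaussianInt[X], c * d1 + 4 = z1 ^ 2 ∧ b * d1 + 4 = y1 ^ 2) ∧
      (∃ (n : ℕ) (w : ℕ → GaussianInt[X]),
        w 0 = z1 ∧ 2 * w 1 = t * z1 + c * y1 ∧
        (∀ k, w (k + 2) = t * w (k + 1) - w k) ∧ z = w n)) :=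
  pellian_solutions_from_recurrences_general a b c s t ha hb hs ht hαβ hβγ hγ d x y z hx hy hz
end

section
/- (i) If z, x ∈ ℤ[i][X] satisfy a*z^2 − c*x^2 = 4*(a − c) and c divides z^2 − 4, then a divides x^2 − 4. (ii) If z, y ∈ ℤ[i][X] satisfy b*z^2 − c*y^2 = 4*(b − c) and c divides z^2 − 4, then b divides y^2 − 4. (iii) If z ∈ ℤ[i][X] is nonconstant (deg(z) > 0) and c divides z^2 − 4, then 2*deg(z) ≥ γ. -/
/-!
Subtracting the Pellian equation from `a` times `z ^ 2 - 4 = c * w` gives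
`c * (x ^ 2 - 4) = c * (a * w)`, and `c` cancels. For the degree bound, `z ^ 2 - 4` is a nonzero
polynomial of degree `2 * deg z` divisible by `c`.
-/

open Polynomial

theorem dvd_sq_sub_four_of_pellian {R : Type*} [CommRing R] [IsDomain R] {a c z x : R}
    (hc : c ≠ 0) (heq : a * z ^ 2 - c * x ^ 2 = 4 * (a - c)) (hdvd : c ∣ z ^ 2 - 4) :
    a ∣ x ^ 2 - 4 := by
  obtain ⟨w, hw⟩ := hdvd
  refine ⟨w, mul_left_cancel₀ hc ?_⟩
  linear_combination a * hw - heq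

theorem natDegree_le_of_dvd_pow_sub_C {R : Type*} [CommRing R] [IsDomain R] {c z : R[X]}
    {n : ℕ} (k : R) (hn : 0 < n) (hz : 0 < z.natDegree) (hdvd : c ∣ z ^ n - C k) :
    c.natDegree ≤ n * z.natDegree := by
  have hdeg : (z ^ n - C k).natDegree = n * z.natDegree := by
    rw [natDegree_sub_C, natDegree_pow]
  have hne : z ^ n - C k ≠ 0 := by
    intro h
    rw [h, natDegree_zero] at hdeg
    exact (Nat.mul_pos hn hz).ne' hdeg.symm
  exact hdeg ▸ natDegree_le_of_dvd hdvd hne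

theorem pellian_congruence_properties_general
    (a b c : GaussianInt[X])
    (hc : c ≠ 0) :
    (∀ z x : GaussianInt[X],
      a * z ^ 2 - c * x ^ 2 = 4 * (a - c) → c ∣ z ^ 2 - 4 → a ∣ x ^ 2 - 4) ∧
    (∀ z y : GaussianInt[X],
      b * z ^ 2 - c * y ^ 2 = 4 * (b - c) → c ∣ z ^ 2 - 4 → b ∣ y ^ 2 - 4) ∧
    (∀ z : GaussianInt[X],
      0 < z.natDegree → c ∣ z ^ 2 - 4 → c.natDegree ≤ 2 * z.natDegree) := by
  refine ⟨fun z x heq hdvd => dvd_sq_sub_four_of_pellian hc heq hdvd,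
    fun z y heq hdvd => dvd_sq_sub_four_of_pellian hc heq hdvd, fun z hz hdvd => ?_⟩
  have hfour : (4 : GaussianInt[X]) = C 4 := (map_ofNat C 4).symm
  exact natDegree_le_of_dvd_pow_sub_C 4 two_pos hz (hfour ▸ hdvd)

/-- Congruence properties of solutions of the Pellian equations attached to a
D(4)-triple in ℤ[i][X], and a degree lower bound. -/
theorem pellian_congruence_properties
    (a b c r s t : GaussianInt[X])
    (ha : a ≠ 0) (hb : b ≠ 0) (hc : c ≠ 0)
    (hab : a ≠ b) (hac : a ≠ c) (hbc : b ≠ c)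
    (hr : a * b + 4 = r ^ 2) (hs : a * c + 4 = s ^ 2) (ht : b * c + 4 = t ^ 2)
    (hαβ : a.natDegree ≤ b.natDegree) (hβγ : b.natDegree ≤ c.natDegree)
    (hβ : 0 < b.natDegree) (hγ : 0 < c.natDegree) :
    (∀ z x : GaussianInt[X],
      a * z ^ 2 - c * x ^ 2 = 4 * (a - c) → c ∣ z ^ 2 - 4 → a ∣ x ^ 2 - 4) ∧
    (∀ z y : GaussianInt[X],
      b * z ^ 2 - c * y ^ 2 = 4 * (b - c) → c ∣ z ^ 2 - 4 → b ∣ y ^ 2 - 4) ∧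
    (∀ z : GaussianInt[X],
      0 < z.natDegree → c ∣ z ^ 2 - 4 → c.natDegree ≤ 2 * z.natDegree) :=
  pellian_congruence_properties_general a b c hc
end

section
/- If m and n are nonnegative integers with v_m = w_n, then n ≤ m + 1 and m ≤ 2n + 1. -/
/-!
Write `S = deg s`, so that `2S = deg e + deg c` from `e c + 4 = s²`. Along the recurrence
`u (k + 2) = s u (k + 1) - u k` each step raises the degree by at most `S`, which gives
`4 deg u_k + deg e ≤ 3 deg c + 4kS`. Conversely, the quadratic form
`u_{k+1}² - s u_k u_{k+1} + u_k²` is constant, equal to `c (c - e)`; comparing degrees in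
`u₂ u₀ = u₁² - c (c - e)` shows that from index 2 on the degree grows by exactly `S` per
step, starting above `3 deg c / 4`. When `v_m = w_n` the two estimates, one for each sequence,
pin the indices against each other.
-/

open Polynomial

section Recurrence

variable {R : Type*} [CommRing R] {s : R[X]} {u : ℕ → R[X]}

theorem natDegree_recurrence_le (hrec : ∀ k, u (k + 2) = s * u (k + 1) - u k) {q M N : ℕ}
    (h0 : q * (u 0).natDegree + M ≤ N) (h1 : q * (u 1).natDegree + M ≤ N + q * s.natDegree)
    (k : ℕ) : q * (u k).natDegree + M ≤ N + k * (q * s.natDegree) := by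
  induction k using Nat.twoStepInduction with
  | zero => simpa using h0
  | one => simpa using h1
  | more k ihk ihk1 =>
    have hstep : (u (k + 2)).natDegree ≤
        max (s.natDegree + (u (k + 1)).natDegree) (u k).natDegree := by
      rw [hrec]
      exact (natDegree_sub_le _ _).trans (max_le_max natDegree_mul_le le_rfl)
    rcases le_max_iff.mp hstep with h | h <;> nlinarith

theorem recurrence_mul_eq (hrec : ∀ k, u (k + 2) = s * u (k + 1) - u k) {K : R[X]}
    (h : u 1 ^ 2 - s * u 0 * u 1 + u 0 ^ 2 = K) (k : ℕ) :
    u (k + 2) * u k = u (k + 1) ^ 2 - K := by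
  have invariant : ∀ k, u (k + 1) ^ 2 - s * u k * u (k + 1) + u k ^ 2 = K := by
    intro k
    induction k with
    | zero => exact h
    | succ k ih => rw [hrec]; linear_combination ih
  rw [hrec]
  linear_combination -invariant k

variable [IsDomain R]

theorem natDegree_recurrence_step (hrec : ∀ k, u (k + 2) = s * u (k + 1) - u k)
    (hs : 0 < s.natDegree) {k : ℕ} (hk : u (k + 1) ≠ 0)
    (hlt : (u k).natDegree < s.natDegree + (u (k + 1)).natDegree) :
    (u (k + 2)).natDegree = s.natDegree + (u (k + 1)).natDegree := by
  have hmul := natDegree_mul (ne_zero_of_natDegree_gt hs) hk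
  rw [hrec, natDegree_sub_eq_left_of_natDegree_lt (hmul ▸ hlt), hmul]

theorem natDegree_recurrence_eq (hrec : ∀ k, u (k + 2) = s * u (k + 1) - u k)
    (hs : 0 < s.natDegree) {j : ℕ} (hj : u (j + 1) ≠ 0)
    (hlt : (u j).natDegree < s.natDegree + (u (j + 1)).natDegree) (i : ℕ) :
    (u (j + 1 + i)).natDegree = (u (j + 1)).natDegree + i * s.natDegree := by
  have growing : ∀ i, u (j + i + 1) ≠ 0 ∧
      (u (j + i)).natDegree < s.natDegree + (u (j + i + 1)).natDegree := by
    intro i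
    induction i with
    | zero => exact ⟨hj, hlt⟩
    | succ i ih =>
      have hdeg := natDegree_recurrence_step hrec hs ih.1 ih.2
      show u (j + i + 2) ≠ 0 ∧
        (u (j + i + 1)).natDegree < s.natDegree + (u (j + i + 2)).natDegree
      refine ⟨fun h0 => ?_, by omega⟩
      rw [h0, natDegree_zero] at hdeg
      omega
  induction i with
  | zero => simp
  | succ i ih =>
    rw [show j + 1 + (i + 1) = j + i + 2 by omega,
      natDegree_recurrence_step hrec hs (growing i).1 (growing i).2, add_right_comm, ih]
    ring

end Recurrence

section Degree

variable {R : Type*} [CommRing R] [IsDomain R]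

theorem natDegree_sq_sub_mul_sub {c e r : R[X]} (hc : c ≠ 0) (he : e.natDegree < c.natDegree)
    (hr : r.natDegree < c.natDegree) :
    (r ^ 2 - c * (c - e)).natDegree = 2 * c.natDegree := by
  have hce : (c - e).natDegree = c.natDegree := natDegree_sub_eq_left_of_natDegree_lt he
  have hce0 : c - e ≠ 0 := fun h0 => by rw [h0, natDegree_zero] at hce; omega
  have hprod : (c * (c - e)).natDegree = 2 * c.natDegree := by
    rw [natDegree_mul hc hce0, hce, two_mul]
  rw [natDegree_sub_eq_right_of_natDegree_lt (by rw [natDegree_pow, hprod]; omega), hprod]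

instance [NeZero (2 : R)] : NeZero (2 : R[X]) :=
  ⟨by rw [← C_ofNat]; exact C_ne_zero.2 two_ne_zero⟩

theorem mul_ne_neg_four [NeZero (2 : R)] {c : R[X]} (hc : 0 < c.natDegree) (q : R[X]) :
    c * q ≠ -4 := by
  intro h
  have h4 : (-4 : R[X]) ≠ 0 := by
    rw [neg_ne_zero, show (4 : R[X]) = 2 * 2 by norm_num]
    exact mul_ne_zero two_ne_zero two_ne_zero
  have := natDegree_le_of_dvd ⟨q, h.symm⟩ h4
  rw [natDegree_neg, natDegree_ofNat] at this
  omega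

end Degree

section PellSequence

variable {R : Type*} [CommRing R] [IsDomain R]

/-- The paper's sequences are `IsPellSequence a c s x₀ v` and `IsPellSequence b c t y₁ w`, with
`d₀`, `d₁` the witnesses of `exists_d`. -/
structure IsPellSequence (e c s x : R[X]) (u : ℕ → R[X]) : Prop where
  left_ne_zero : e ≠ 0
  right_ne_zero : c ≠ 0
  natDegree_right_pos : 0 < c.natDegree
  natDegree_left_le : e.natDegree ≤ c.natDegree
  mul_add_four : e * c + 4 = s ^ 2
  pell : e * u 0 ^ 2 - c * x ^ 2 = 4 * (e - c)
  natDegree_zero_le : 4 * (u 0).natDegree + e.natDegree ≤ 3 * c.natDegree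
  natDegree_x_le : 4 * x.natDegree ≤ e.natDegree + c.natDegree
  exists_d : ∃ d, c * d + 4 = u 0 ^ 2 ∧ e * d + 4 = x ^ 2
  two_mul_one : 2 * u 1 = s * u 0 + c * x
  recurrence : ∀ k, u (k + 2) = s * u (k + 1) - u k

namespace IsPellSequence

variable {e c s x : R[X]} {u : ℕ → R[X]}

theorem two_mul_natDegree_s (h : IsPellSequence e c s x u) :
    2 * s.natDegree = e.natDegree + c.natDegree := by
  have := congrArg natDegree h.mul_add_four
  rwa [← C_ofNat, natDegree_add_C, natDegree_mul h.left_ne_zero h.right_ne_zero, natDegree_pow,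
    eq_comm] at this

theorem natDegree_s_pos (h : IsPellSequence e c s x u) : 0 < s.natDegree := by
  have := h.two_mul_natDegree_s
  have := h.natDegree_right_pos
  omega

theorem invariant [NeZero (2 : R)] (h : IsPellSequence e c s x u) :
    u 1 ^ 2 - s * u 0 * u 1 + u 0 ^ 2 = c * (c - e) := by
  refine mul_left_cancel₀ (mul_ne_zero (two_ne_zero (α := R[X])) two_ne_zero) ?_
  linear_combination (2 * u 1 - s * u 0 + c * x) * h.two_mul_one + u 0 ^ 2 * h.mul_add_four -
    c * h.pell

theorem apply_one_ne_zero [NeZero (2 : R)] (h : IsPellSequence e c s x u) : u 1 ≠ 0 := by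
  obtain ⟨d, hdc, hde⟩ := h.exists_d
  intro h1
  -- `u₁ = 0` gives `s u₀ = -c x`; squaring and eliminating `s²`, `u₀²`, `x²` yields
  -- `c (e + d - c) = -4`.
  refine mul_ne_neg_four h.natDegree_right_pos (e + d - c)
    (mul_left_cancel₀ (mul_ne_zero (two_ne_zero (α := R[X])) two_ne_zero) ?_)
  linear_combination (c * d + 4) * h.mul_add_four + s ^ 2 * hdc - c ^ 2 * hde -
    (s * u 0 - c * x) * h.two_mul_one + (s * u 0 - c * x) * 2 * h1

theorem four_mul_natDegree_le [NeZero (2 : R)] (h : IsPellSequence e c s x u) (k : ℕ) :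
    4 * (u k).natDegree + e.natDegree ≤
      3 * c.natDegree + 2 * k * (e.natDegree + c.natDegree) := by
  have hS := h.two_mul_natDegree_s
  have hone :
      (u 1).natDegree ≤ max (s.natDegree + (u 0).natDegree) (c.natDegree + x.natDegree) := by
    rw [← natDegree_C_mul (a := (2 : R)) two_ne_zero, C_ofNat, h.two_mul_one]
    exact (natDegree_add_le _ _).trans (max_le_max natDegree_mul_le natDegree_mul_le)
  have := natDegree_recurrence_le h.recurrence (q := 4) h.natDegree_zero_le
    (by have := h.natDegree_x_le; have := h.natDegree_zero_le; omega) k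
  rw [show 2 * k * (e.natDegree + c.natDegree) = k * (4 * s.natDegree) by rw [← hS]; ring]
  exact this

theorem natDegree_two_add_natDegree_zero [NeZero (2 : R)] (h : IsPellSequence e c s x u)
    (he : e.natDegree < c.natDegree) (h1 : (u 1).natDegree < c.natDegree) :
    u 2 ≠ 0 ∧ (u 2).natDegree + (u 0).natDegree = 2 * c.natDegree := by
  have hmul := recurrence_mul_eq h.recurrence h.invariant 0
  have hdeg := natDegree_sq_sub_mul_sub h.right_ne_zero he h1
  have hne : u 2 * u 0 ≠ 0 := by
    rw [hmul]
    intro h0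
    rw [h0, natDegree_zero] at hdeg
    have := h.natDegree_right_pos
    omega
  refine ⟨left_ne_zero_of_mul hne, ?_⟩
  rw [← natDegree_mul (left_ne_zero_of_mul hne) (right_ne_zero_of_mul hne), hmul, hdeg]

theorem natDegree_two_gt [NeZero (2 : R)] (h : IsPellSequence e c s x u) :
    u 2 ≠ 0 ∧ (u 1).natDegree < s.natDegree + (u 2).natDegree ∧
      3 * c.natDegree < 4 * (u 2).natDegree := by
  have hS := h.two_mul_natDegree_s
  have hc := h.natDegree_right_pos
  have hec := h.natDegree_left_le
  have h0 := h.natDegree_zero_le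
  -- Either the degree already grows from index 0, or `deg u₀` is large and the identity
  -- `u₂ u₀ = u₁² - c (c - e)` makes `deg u₂` large.
  by_cases hgrow : (u 0).natDegree < s.natDegree + (u 1).natDegree
  · have h2 := natDegree_recurrence_eq h.recurrence h.natDegree_s_pos (j := 0)
      h.apply_one_ne_zero hgrow 1
    simp only [zero_add, one_mul, Nat.reduceAdd] at h2
    have hlarge : c.natDegree < 4 * (u 1).natDegree + 2 * e.natDegree := by
      by_contra! hsmall
      obtain ⟨-, h20⟩ := h.natDegree_two_add_natDegree_zero
        (lt_of_le_of_ne hec fun heq => by omega) (by omega)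
      omega
    refine ⟨fun h20 => ?_, by omega, by omega⟩
    rw [h20, natDegree_zero] at h2
    omega
  · obtain ⟨h2ne, h20⟩ := h.natDegree_two_add_natDegree_zero (by omega) (by omega)
    exact ⟨h2ne, by omega, by omega⟩

theorem lt_four_mul_natDegree [NeZero (2 : R)] (h : IsPellSequence e c s x u) (k : ℕ) :
    3 * c.natDegree + 1 + 2 * k * (e.natDegree + c.natDegree) ≤ 4 * (u (k + 2)).natDegree := by
  obtain ⟨h2ne, hgrow, hlarge⟩ := h.natDegree_two_gt
  have hk := natDegree_recurrence_eq h.recurrence h.natDegree_s_pos (j := 1) h2ne hgrow k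
  rw [show 1 + 1 + k = k + 2 by omega] at hk
  rw [hk, ← h.two_mul_natDegree_s]
  nlinarith

variable {e' s' x' : R[X]} {u' : ℕ → R[X]} {m n : ℕ}

theorem le_add_one_of_eq [NeZero (2 : R)] (h : IsPellSequence e c s x u)
    (h' : IsPellSequence e' c s' x' u') (he : e.natDegree ≤ e'.natDegree) (heq : u m = u' n) :
    n ≤ m + 1 := by
  by_contra! hmn
  obtain ⟨k, rfl⟩ : ∃ k, n = k + 2 := ⟨n - 2, by omega⟩
  have hupper := h.four_mul_natDegree_le m
  have hlower := h'.lt_four_mul_natDegree k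
  have hmono : 2 * m * (e.natDegree + c.natDegree) ≤ 2 * k * (e'.natDegree + c.natDegree) :=
    Nat.mul_le_mul (by omega) (by omega)
  rw [heq] at hupper
  omega

theorem le_two_mul_add_one_of_eq [NeZero (2 : R)] (h : IsPellSequence e c s x u)
    (h' : IsPellSequence e' c s' x' u') (heq : u m = u' n) : m ≤ 2 * n + 1 := by
  by_contra! hmn
  obtain ⟨k, rfl⟩ : ∃ k, m = k + 2 := ⟨m - 2, by omega⟩
  have hupper := h'.four_mul_natDegree_le n
  have hlower := h.lt_four_mul_natDegree k
  have hmono : 2 * n * (e'.natDegree + c.natDegree) ≤ 2 * k * (e.natDegree + c.natDegree) := by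
    have := h'.natDegree_left_le
    calc 2 * n * (e'.natDegree + c.natDegree) ≤ 2 * n * (2 * c.natDegree) := by gcongr; omega
      _ = 2 * (2 * n) * c.natDegree := by ring
      _ ≤ 2 * k * (e.natDegree + c.natDegree) := by gcongr <;> omega
  rw [heq] at hlower
  omega

end IsPellSequence

end PellSequence

theorem index_inequality_for_equal_terms_general
    (a b c s t : GaussianInt[X])
    (ha : a ≠ 0) (hb : b ≠ 0) (hc : c ≠ 0)
    (hs : a * c + 4 = s ^ 2) (ht : b * c + 4 = t ^ 2)
    (hαβ : a.natDegree ≤ b.natDegree) (hβγ : b.natDegree ≤ c.natDegree)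
    (hγ : 0 < c.natDegree)
    (z0 x0 d0 : GaussianInt[X]) (v : ℕ → GaussianInt[X])
    (hz0 : a * z0 ^ 2 - c * x0 ^ 2 = 4 * (a - c))
    (hz0deg : 4 * z0.natDegree + a.natDegree ≤ 3 * c.natDegree)
    (hx0deg : 4 * x0.natDegree ≤ a.natDegree + c.natDegree)
    (hd0c : c * d0 + 4 = z0 ^ 2) (hd0a : a * d0 + 4 = x0 ^ 2)
    (hv0 : v 0 = z0) (hv1 : 2 * v 1 = s * z0 + c * x0)
    (hvrec : ∀ k, v (k + 2) = s * v (k + 1) - v k)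
    (z1 y1 d1 : GaussianInt[X]) (w : ℕ → GaussianInt[X])
    (hz1 : b * z1 ^ 2 - c * y1 ^ 2 = 4 * (b - c))
    (hz1deg : 4 * z1.natDegree + b.natDegree ≤ 3 * c.natDegree)
    (hy1deg : 4 * y1.natDegree ≤ b.natDegree + c.natDegree)
    (hd1c : c * d1 + 4 = z1 ^ 2) (hd1b : b * d1 + 4 = y1 ^ 2)
    (hw0 : w 0 = z1) (hw1 : 2 * w 1 = t * z1 + c * y1)
    (hwrec : ∀ k, w (k + 2) = t * w (k + 1) - w k)
    (m n : ℕ) (heq : v m = w n) :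
    n ≤ m + 1 ∧ m ≤ 2 * n + 1 := by
  subst hv0 hw0
  have hv : IsPellSequence a c s x0 v := ⟨ha, hc, hγ, hαβ.trans hβγ, hs, hz0, hz0deg, hx0deg,
    ⟨d0, hd0c, hd0a⟩, hv1, hvrec⟩
  have hw : IsPellSequence b c t y1 w := ⟨hb, hc, hγ, hβγ, ht, hz1, hz1deg, hy1deg,
    ⟨d1, hd1c, hd1b⟩, hw1, hwrec⟩
  exact ⟨hv.le_add_one_of_eq hw hαβ heq, hv.le_two_mul_add_one_of_eq hw heq⟩

/-- If v_m = w_n then n - 1 ≤ m ≤ 2n + 1. -/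
theorem index_inequality_for_equal_terms
    (a b c r s t : GaussianInt[X])
    (ha : a ≠ 0) (hb : b ≠ 0) (hc : c ≠ 0)
    (hab : a ≠ b) (hac : a ≠ c) (hbc : b ≠ c)
    (hr : a * b + 4 = r ^ 2) (hs : a * c + 4 = s ^ 2) (ht : b * c + 4 = t ^ 2)
    (hαβ : a.natDegree ≤ b.natDegree) (hβγ : b.natDegree ≤ c.natDegree)
    (hβ : 0 < b.natDegree) (hγ : 0 < c.natDegree)
    (z0 x0 d0 : GaussianInt[X]) (v : ℕ → GaussianInt[X])
    (hz0 : a * z0 ^ 2 - c * x0 ^ 2 = 4 * (a - c))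
    (hz0deg : 4 * z0.natDegree + a.natDegree ≤ 3 * c.natDegree)
    (hx0deg : 4 * x0.natDegree ≤ a.natDegree + c.natDegree)
    (hd0c : c * d0 + 4 = z0 ^ 2) (hd0a : a * d0 + 4 = x0 ^ 2)
    (hv0 : v 0 = z0) (hv1 : 2 * v 1 = s * z0 + c * x0)
    (hvrec : ∀ k, v (k + 2) = s * v (k + 1) - v k)
    (z1 y1 d1 : GaussianInt[X]) (w : ℕ → GaussianInt[X])
    (hz1 : b * z1 ^ 2 - c * y1 ^ 2 = 4 * (b - c))
    (hz1deg : 4 * z1.natDegree + b.natDegree ≤ 3 * c.natDegree)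
    (hy1deg : 4 * y1.natDegree ≤ b.natDegree + c.natDegree)
    (hd1c : c * d1 + 4 = z1 ^ 2) (hd1b : b * d1 + 4 = y1 ^ 2)
    (hw0 : w 0 = z1) (hw1 : 2 * w 1 = t * z1 + c * y1)
    (hwrec : ∀ k, w (k + 2) = t * w (k + 1) - w k)
    (m n : ℕ) (heq : v m = w n) :
    n ≤ m + 1 ∧ m ≤ 2 * n + 1 :=
  index_inequality_for_equal_terms_general a b c s t ha hb hc hs ht hαβ hβγ hγ z0 x0 d0 v hz0 hz0deg
    hx0deg hd0c hd0a hv0 hv1 hvrec z1 y1 d1 w hz1 hz1deg hy1deg hd1c hd1b hw0 hw1 hwrec m n heq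
end

section
/- For every m ≥ 0, c divides v_{2m} − z0 and c divides v_{2m+1} − v_1; for every n ≥ 0, c divides w_{2n} − z1 and c divides w_{2n+1} − w_1. -/
/-!
Since 2 = -i(1 + i)² in ℤ[i], the conditions `a c + 4 = s²`, `c d + 4 = z²`, `a d + 4 = x²` give
`(a z + s x)(a z - s x) = 4 (a² - a c - a d - 4)`. The two factors differ by `2 s x`, so they are
congruent modulo `(1 + i)²`; as their product is divisible by `(1 + i)³`, primality of `1 + i`
forces `(1 + i)² ∣ a z + s x`, i.e. `2 ∣ a z + s x`.
Hence `s v₁ - 2 v₀ = c (a z + s x) / 2` and `s v₀ - 2 v₁ = -c x` are divisible by `c`, and these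
are exactly the conditions making the recurrence `v (k + 2) = s v (k + 1) - v k` 2-periodic mod `c`.
-/

open Polynomial

theorem GaussianInt.prime_one_add_i : Prime (⟨1, 1⟩ : GaussianInt) := by
  let normNat : GaussianInt →* ℕ := (Int.natAbsHom : ℤ →* ℕ).comp Zsqrtd.normMonoidHom
  have : IsLocalHom normNat := ⟨fun _ hx => Zsqrtd.norm_eq_one_iff.mp (Nat.isUnit_iff.mp hx)⟩
  exact (Irreducible.of_map (f := normNat) (x := ⟨1, 1⟩) (by exact Nat.prime_two)).prime

theorem GaussianInt.associated_one_add_i_sq_two : Associated ((⟨1, 1⟩ : GaussianInt) ^ 2) 2 :=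
  associated_of_dvd_dvd ⟨⟨0, -1⟩, by decide⟩ ⟨⟨0, 1⟩, by decide⟩

section Domain

variable {R : Type*} [CommRing R] [IsDomain R]

theorem Prime.sq_dvd_of_sq_dvd_sub_of_pow_three_dvd_mul {p u w : R} (hp : Prime p)
    (hsub : p ^ 2 ∣ u - w) (hmul : p ^ 3 ∣ u * w) : p ^ 2 ∣ u := by
  have of_sq_dvd_right (hw : p ^ 2 ∣ w) : p ^ 2 ∣ u := by
    simpa using dvd_add hsub hw
  by_cases hpu : p ∣ u
  · have hpw : p ∣ w := by
      simpa using dvd_sub hpu ((dvd_pow_self p two_ne_zero).trans hsub)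
    obtain ⟨u', rfl⟩ := hpu
    obtain ⟨w', rfl⟩ := hpw
    have hp_dvd : p ∣ u' * w' := by
      rw [← mul_dvd_mul_iff_left (pow_ne_zero 2 hp.ne_zero)]
      convert hmul using 1 <;> ring
    rcases hp.dvd_or_dvd hp_dvd with ⟨k, rfl⟩ | ⟨k, rfl⟩
    · exact ⟨k, by ring⟩
    · exact of_sq_dvd_right ⟨k, by ring⟩
  · exact of_sq_dvd_right <| (pow_dvd_pow p (by norm_num)).trans
      (hp.pow_dvd_of_dvd_mul_left 3 hpu hmul)

theorem two_dvd_mul_add_mul {π : R} (hπ : Prime π) (hπ2 : Associated (π ^ 2) 2)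
    {a c s z x d : R} (hs : a * c + 4 = s ^ 2) (hzc : c * d + 4 = z ^ 2)
    (hxa : a * d + 4 = x ^ 2) : 2 ∣ a * z + s * x := by
  have hprod : (a * z + s * x) * (a * z - s * x) = 4 * (a ^ 2 - a * c - a * d - 4) := by
    linear_combination (-a ^ 2) * hzc + x ^ 2 * hs + (a * c + 4) * hxa
  have hπ4 : π ^ 4 ∣ (a * z + s * x) * (a * z - s * x) := by
    rw [hprod, show π ^ 4 = (π ^ 2) ^ 2 by ring, show (4 : R) = 2 ^ 2 by norm_num]
    exact (hπ2.pow_pow.dvd_iff_dvd_left.mpr dvd_rfl).mul_right _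
  have hsub : π ^ 2 ∣ (a * z + s * x) - (a * z - s * x) :=
    hπ2.dvd_iff_dvd_left.mpr ⟨s * x, by ring⟩
  exact hπ2.dvd_iff_dvd_left.mp <| hπ.sq_dvd_of_sq_dvd_sub_of_pow_three_dvd_mul hsub
    ((pow_dvd_pow π (by norm_num)).trans hπ4)

end Domain

section Recurrence

variable {R : Type*} [CommRing R] {c s : R} {v : ℕ → R}

theorem dvd_sub_two_step_of_recurrence (hrec : ∀ k, v (k + 2) = s * v (k + 1) - v k)
    (h0 : c ∣ s * v 1 - 2 * v 0) (h1 : c ∣ s * v 0 - 2 * v 1) (k : ℕ) :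
    c ∣ v (k + 2) - v k := by
  suffices ∀ k, c ∣ v (k + 2) - v k ∧ c ∣ v (k + 3) - v (k + 1) from (this k).1
  intro k
  induction k with
  | zero =>
    have h2 : v 2 - v 0 = s * v 1 - 2 * v 0 := by rw [hrec 0]; ring
    have h3 : v 3 - v 1 = s * (v 2 - v 0) + (s * v 0 - 2 * v 1) := by rw [hrec 1]; ring
    exact ⟨h2 ▸ h0, h3 ▸ dvd_add ((h2 ▸ h0).mul_left s) h1⟩
  | succ k ih =>
    have h : v (k + 4) - v (k + 2) = s * (v (k + 3) - v (k + 1)) - (v (k + 2) - v k) := by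
      rw [hrec (k + 2), hrec k]; ring
    exact ⟨ih.2, h ▸ dvd_sub (ih.2.mul_left s) ih.1⟩

theorem dvd_sub_of_two_step (hstep : ∀ k, c ∣ v (k + 2) - v k) (m i : ℕ) :
    c ∣ v (2 * m + i) - v i := by
  induction m with
  | zero => simp
  | succ m ih =>
    have h : v (2 * (m + 1) + i) - v i =
        (v (2 * m + i + 2) - v (2 * m + i)) + (v (2 * m + i) - v i) := by
      ring_nf
    exact h ▸ dvd_add (hstep _) ih

end Recurrence

theorem dvd_sub_of_pell_sequence {R : Type*} [CommRing R] [IsDomain R] {π : R} (hπ : Prime π)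
    (hπ2 : Associated (π ^ 2) 2) {a c s z x d : R} {v : ℕ → R}
    (hs : a * c + 4 = s ^ 2) (hzc : c * d + 4 = z ^ 2) (hxa : a * d + 4 = x ^ 2)
    (hv0 : v 0 = z) (hv1 : 2 * v 1 = s * z + c * x)
    (hrec : ∀ k, v (k + 2) = s * v (k + 1) - v k) (m : ℕ) :
    c ∣ v (2 * m) - z ∧ c ∣ v (2 * m + 1) - v 1 := by
  obtain ⟨k, hk⟩ := two_dvd_mul_add_mul hπ hπ2 hs hzc hxa
  have h2 : (2 : R) ≠ 0 := hπ2.ne_zero_iff.mp (pow_ne_zero 2 hπ.ne_zero)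
  have h0 : c ∣ s * v 1 - 2 * v 0 := ⟨k, mul_left_cancel₀ h2 <| by
    linear_combination s * hv1 - 2 * (2 : R) * hv0 - z * hs + c * hk⟩
  have h1 : c ∣ s * v 0 - 2 * v 1 := ⟨-x, by linear_combination s * hv0 - hv1⟩
  have hstep := dvd_sub_two_step_of_recurrence hrec h0 h1
  exact ⟨hv0 ▸ dvd_sub_of_two_step hstep m 0, dvd_sub_of_two_step hstep m 1⟩

theorem congruences_mod_c_for_sequences_general
    (a b c s t : GaussianInt[X])
    (hs : a * c + 4 = s ^ 2) (ht : b * c + 4 = t ^ 2)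
    (z0 x0 d0 : GaussianInt[X]) (v : ℕ → GaussianInt[X])
    (hd0c : c * d0 + 4 = z0 ^ 2) (hd0a : a * d0 + 4 = x0 ^ 2)
    (hv0 : v 0 = z0) (hv1 : 2 * v 1 = s * z0 + c * x0)
    (hvrec : ∀ k, v (k + 2) = s * v (k + 1) - v k)
    (z1 y1 d1 : GaussianInt[X]) (w : ℕ → GaussianInt[X])
    (hd1c : c * d1 + 4 = z1 ^ 2) (hd1b : b * d1 + 4 = y1 ^ 2)
    (hw0 : w 0 = z1) (hw1 : 2 * w 1 = t * z1 + c * y1)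
    (hwrec : ∀ k, w (k + 2) = t * w (k + 1) - w k) :
    (∀ m : ℕ, c ∣ v (2 * m) - z0 ∧ c ∣ v (2 * m + 1) - v 1) ∧
    (∀ n : ℕ, c ∣ w (2 * n) - z1 ∧ c ∣ w (2 * n + 1) - w 1) := by
  have hπ : Prime (C ⟨1, 1⟩ : GaussianInt[X]) := prime_C_iff.mpr GaussianInt.prime_one_add_i
  have hπ2 : Associated ((C ⟨1, 1⟩ : GaussianInt[X]) ^ 2) 2 := by
    simpa only [map_pow, map_ofNat] using GaussianInt.associated_one_add_i_sq_two.map C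
  exact ⟨dvd_sub_of_pell_sequence hπ hπ2 hs hd0c hd0a hv0 hv1 hvrec,
    dvd_sub_of_pell_sequence hπ hπ2 ht hd1c hd1b hw0 hw1 hwrec⟩

/-- Congruences modulo c for the recurrence sequences. -/
theorem congruences_mod_c_for_sequences
    (a b c r s t : GaussianInt[X])
    (ha : a ≠ 0) (hb : b ≠ 0) (hc : c ≠ 0)
    (hab : a ≠ b) (hac : a ≠ c) (hbc : b ≠ c)
    (hr : a * b + 4 = r ^ 2) (hs : a * c + 4 = s ^ 2) (ht : b * c + 4 = t ^ 2)
    (hαβ : a.natDegree ≤ b.natDegree) (hβγ : b.natDegree ≤ c.natDegree)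
    (hβ : 0 < b.natDegree) (hγ : 0 < c.natDegree)
    (z0 x0 d0 : GaussianInt[X]) (v : ℕ → GaussianInt[X])
    (hz0 : a * z0 ^ 2 - c * x0 ^ 2 = 4 * (a - c))
    (hz0deg : 4 * z0.natDegree + a.natDegree ≤ 3 * c.natDegree)
    (hx0deg : 4 * x0.natDegree ≤ a.natDegree + c.natDegree)
    (hd0c : c * d0 + 4 = z0 ^ 2) (hd0a : a * d0 + 4 = x0 ^ 2)
    (hv0 : v 0 = z0) (hv1 : 2 * v 1 = s * z0 + c * x0)
    (hvrec : ∀ k, v (k + 2) = s * v (k + 1) - v k)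
    (z1 y1 d1 : GaussianInt[X]) (w : ℕ → GaussianInt[X])
    (hz1 : b * z1 ^ 2 - c * y1 ^ 2 = 4 * (b - c))
    (hz1deg : 4 * z1.natDegree + b.natDegree ≤ 3 * c.natDegree)
    (hy1deg : 4 * y1.natDegree ≤ b.natDegree + c.natDegree)
    (hd1c : c * d1 + 4 = z1 ^ 2) (hd1b : b * d1 + 4 = y1 ^ 2)
    (hw0 : w 0 = z1) (hw1 : 2 * w 1 = t * z1 + c * y1)
    (hwrec : ∀ k, w (k + 2) = t * w (k + 1) - w k) :
    (∀ m : ℕ, c ∣ v (2 * m) - z0 ∧ c ∣ v (2 * m + 1) - v 1) ∧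
    (∀ n : ℕ, c ∣ w (2 * n) - z1 ∧ c ∣ w (2 * n + 1) - w 1) :=
  congruences_mod_c_for_sequences_general a b c s t hs ht z0 x0 d0 v hd0c hd0a hv0 hv1 hvrec z1 y1
    d1 w hd1c hd1b hw0 hw1 hwrec
end

section
/- For every m ≥ 0 (where the integers m, m^2, m*(m+1)/2 and 2m+1 are regarded as constant polynomials in ℤ[i][X]): c^2 divides 2*v_{2m} − 2*z0 − c*(a*z0*m^2 + s*x0*m) and c^2 divides 2*v_{2m+1} − s*z0 − c*(a*s*z0*(m*(m+1)/2) + x0*(2m+1)). For every n ≥ 0: c^2 divides 2*w_{2n} − 2*z1 − c*(b*z1*n^2 + t*y1*n) and c^2 divides 2*w_{2n+1} − t*z1 − c*(b*t*z1*(n*(n+1)/2) + y1*(2n+1)). -/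
/-!
Taken two steps at a time, `v` satisfies `u (k + 2) = (s² - 2) u (k + 1) - u k` with
`s² - 2 = 2 + ac`: a perturbation of order `c` of the recurrence with constant `2`, whose
solutions are arithmetic progressions. In `R ⧸ (c²)`, where `c` squares to zero, the first-order
expansion in `c` is exact, so the congruences become equalities proved by induction on `m`.
-/

open Polynomial

theorem Nat.succ_mul_succ_div_two (m : ℕ) :
    (m + 1) * (m + 1 + 1) / 2 = m * (m + 1) / 2 + (m + 1) := by
  have h := Nat.triangle_succ (m + 1)
  rwa [Nat.add_sub_cancel, Nat.add_sub_cancel, Nat.mul_comm (m + 1 + 1),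
    Nat.mul_comm (m + 1) m] at h

theorem Nat.two_mul_cast_mul_succ_div_two {R : Type*} [CommSemiring R] (m : ℕ) :
    2 * ((m * (m + 1) / 2 : ℕ) : R) = m ^ 2 + m := by
  have h : 2 * (m * (m + 1) / 2) = m ^ 2 + m :=
    (Nat.two_mul_div_two_of_even (Nat.even_mul_succ_self m)).trans (by ring)
  simpa using congrArg (Nat.cast : ℕ → R) h

section Recurrence

variable {R : Type*} [CommRing R] {a s z x : R} {v : ℕ → R}

theorem two_mul_recurrence_eq_of_sq_eq_zero {ε : R} (hε : ε ^ 2 = 0) (hs : a * ε + 4 = s ^ 2)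
    (hv0 : v 0 = z) (hv1 : 2 * v 1 = s * z + ε * x)
    (hrec : ∀ k, v (k + 2) = s * v (k + 1) - v k) (m : ℕ) :
    2 * v (2 * m) = 2 * z + ε * (a * z * (m : R) ^ 2 + s * x * m) ∧
      2 * v (2 * m + 1) =
        s * z + ε * (a * s * z * ((m * (m + 1) / 2 : ℕ) : R) + x * ((2 * m + 1 : ℕ) : R)) := by
  induction m with
  | zero => simp [hv0, hv1]
  | succ m ih =>
    obtain ⟨hev, hodd⟩ := ih
    have hT := Nat.two_mul_cast_mul_succ_div_two (R := R) m
    set T : R := ((m * (m + 1) / 2 : ℕ) : R)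
    push_cast at hodd ⊢
    have hev' : 2 * v (2 * (m + 1)) =
        2 * z + ε * (a * z * ((m : R) + 1) ^ 2 + s * x * (m + 1)) := by
      rw [show 2 * (m + 1) = 2 * m + 2 by ring, hrec]
      linear_combination s * hodd - hev - (z + ε * a * z * T) * hs + 2 * a * ε * z * hT
        + a ^ 2 * z * T * hε
    refine ⟨hev', ?_⟩
    rw [show 2 * (m + 1) + 1 = 2 * m + 1 + 2 by ring, hrec, Nat.succ_mul_succ_div_two,
      show 2 * m + 1 + 1 = 2 * (m + 1) by ring]
    push_cast
    linear_combination s * hev' - hodd - ε * x * ((m : R) + 1) * hs - a * ε * s * z * hT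
      + a * x * ((m : R) + 1) * hε

theorem sq_dvd_two_mul_recurrence_sub {c : R} (hs : a * c + 4 = s ^ 2)
    (hv0 : v 0 = z) (hv1 : 2 * v 1 = s * z + c * x)
    (hrec : ∀ k, v (k + 2) = s * v (k + 1) - v k) (m : ℕ) :
    c ^ 2 ∣ 2 * v (2 * m) - 2 * z - c * (a * z * (m : R) ^ 2 + s * x * m) ∧
      c ^ 2 ∣ 2 * v (2 * m + 1) - s * z -
        c * (a * s * z * ((m * (m + 1) / 2 : ℕ) : R) + x * ((2 * m + 1 : ℕ) : R)) := by
  let π := Ideal.Quotient.mk (Ideal.span {c ^ 2})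
  have hc : π c ^ 2 = 0 := by
    rw [← map_pow]
    exact (Ideal.Quotient.eq_zero_iff_dvd _ _).2 dvd_rfl
  have key := two_mul_recurrence_eq_of_sq_eq_zero (v := π ∘ v) hc
    (by simpa only [map_add, map_mul, map_pow, map_ofNat] using congrArg π hs)
    (by rw [Function.comp_apply, hv0])
    (by simpa only [Function.comp_apply, map_add, map_mul, map_ofNat] using congrArg π hv1)
    (by simp only [Function.comp_apply, hrec, map_sub, map_mul, implies_true]) m
  simp only [← Ideal.Quotient.eq_zero_iff_dvd, sub_sub, map_sub, sub_eq_zero]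
  simpa only [Function.comp_apply, map_add, map_mul, map_pow, map_ofNat, map_natCast] using key

end Recurrence

theorem congruences_mod_c_sq_for_sequences_general
    (a b c s t : GaussianInt[X])
    (hs : a * c + 4 = s ^ 2) (ht : b * c + 4 = t ^ 2)
    (z0 x0 : GaussianInt[X]) (v : ℕ → GaussianInt[X])
    (hv0 : v 0 = z0) (hv1 : 2 * v 1 = s * z0 + c * x0)
    (hvrec : ∀ k, v (k + 2) = s * v (k + 1) - v k)
    (z1 y1 : GaussianInt[X]) (w : ℕ → GaussianInt[X])
    (hw0 : w 0 = z1) (hw1 : 2 * w 1 = t * z1 + c * y1)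
    (hwrec : ∀ k, w (k + 2) = t * w (k + 1) - w k) :
    (∀ m : ℕ,
      c ^ 2 ∣ 2 * v (2 * m) - 2 * z0 -
        c * (a * z0 * ((m : GaussianInt[X])) ^ 2 + s * x0 * (m : GaussianInt[X])) ∧
      c ^ 2 ∣ 2 * v (2 * m + 1) - s * z0 -
        c * (a * s * z0 * ((m * (m + 1) / 2 : ℕ) : GaussianInt[X]) +
          x0 * ((2 * m + 1 : ℕ) : GaussianInt[X]))) ∧
    (∀ n : ℕ,
      c ^ 2 ∣ 2 * w (2 * n) - 2 * z1 -
        c * (b * z1 * ((n : GaussianInt[X])) ^ 2 + t * y1 * (n : GaussianInt[X])) ∧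
      c ^ 2 ∣ 2 * w (2 * n + 1) - t * z1 -
        c * (b * t * z1 * ((n * (n + 1) / 2 : ℕ) : GaussianInt[X]) +
          y1 * ((2 * n + 1 : ℕ) : GaussianInt[X]))) :=
  ⟨sq_dvd_two_mul_recurrence_sub hs hv0 hv1 hvrec, sq_dvd_two_mul_recurrence_sub ht hw0 hw1 hwrec⟩

/-- Congruences modulo c² for the recurrence sequences. -/
theorem congruences_mod_c_sq_for_sequences
    (a b c r s t : GaussianInt[X])
    (ha : a ≠ 0) (hb : b ≠ 0) (hc : c ≠ 0)
    (hab : a ≠ b) (hac : a ≠ c) (hbc : b ≠ c)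
    (hr : a * b + 4 = r ^ 2) (hs : a * c + 4 = s ^ 2) (ht : b * c + 4 = t ^ 2)
    (hαβ : a.natDegree ≤ b.natDegree) (hβγ : b.natDegree ≤ c.natDegree)
    (hβ : 0 < b.natDegree) (hγ : 0 < c.natDegree)
    (z0 x0 d0 : GaussianInt[X]) (v : ℕ → GaussianInt[X])
    (hz0 : a * z0 ^ 2 - c * x0 ^ 2 = 4 * (a - c))
    (hz0deg : 4 * z0.natDegree + a.natDegree ≤ 3 * c.natDegree)
    (hx0deg : 4 * x0.natDegree ≤ a.natDegree + c.natDegree)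
    (hd0c : c * d0 + 4 = z0 ^ 2) (hd0a : a * d0 + 4 = x0 ^ 2)
    (hv0 : v 0 = z0) (hv1 : 2 * v 1 = s * z0 + c * x0)
    (hvrec : ∀ k, v (k + 2) = s * v (k + 1) - v k)
    (z1 y1 d1 : GaussianInt[X]) (w : ℕ → GaussianInt[X])
    (hz1 : b * z1 ^ 2 - c * y1 ^ 2 = 4 * (b - c))
    (hz1deg : 4 * z1.natDegree + b.natDegree ≤ 3 * c.natDegree)
    (hy1deg : 4 * y1.natDegree ≤ b.natDegree + c.natDegree)
    (hd1c : c * d1 + 4 = z1 ^ 2) (hd1b : b * d1 + 4 = y1 ^ 2)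
    (hw0 : w 0 = z1) (hw1 : 2 * w 1 = t * z1 + c * y1)
    (hwrec : ∀ k, w (k + 2) = t * w (k + 1) - w k) :
    (∀ m : ℕ,
      c ^ 2 ∣ 2 * v (2 * m) - 2 * z0 -
        c * (a * z0 * ((m : GaussianInt[X])) ^ 2 + s * x0 * (m : GaussianInt[X])) ∧
      c ^ 2 ∣ 2 * v (2 * m + 1) - s * z0 -
        c * (a * s * z0 * ((m * (m + 1) / 2 : ℕ) : GaussianInt[X]) +
          x0 * ((2 * m + 1 : ℕ) : GaussianInt[X]))) ∧
    (∀ n : ℕ,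
      c ^ 2 ∣ 2 * w (2 * n) - 2 * z1 -
        c * (b * z1 * ((n : GaussianInt[X])) ^ 2 + t * y1 * (n : GaussianInt[X])) ∧
      c ^ 2 ∣ 2 * w (2 * n + 1) - t * z1 -
        c * (b * t * z1 * ((n * (n + 1) / 2 : ℕ) : GaussianInt[X]) +
          y1 * ((2 * n + 1 : ℕ) : GaussianInt[X]))) :=
  congruences_mod_c_sq_for_sequences_general a b c s t hs ht z0 x0 v hv0 hv1 hvrec z1 y1 w hw0 hw1
    hwrec
end

section
/- Assume α = 0 (i.e. a is a nonzero constant). Let z0, x0 ∈ ℤ[i][X] satisfy a*z0^2 − c*x0^2 = 4*(a − c), with x0 constant (deg(x0) = 0 or x0 = 0) and z0 nonconstant (deg(z0) > 0). Then x0^2 = a^2 + 4 and z0^2 = a*c + 4 (i.e. z0 = ±s); moreover x0 = 0 and a^2 = −4 (i.e. a = 2i or a = −2i). -/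
/-!
Since `a` and `x0` are constants, multiplying `a z0² - c x0² = 4 (a - c)` by `a` and substituting
`a c = s² - 4` gives `(a z0)² = (x0² - 4) s² + 4 (a² - x0² + 4)`, a Pell-type equation whose
coefficients are constants. If `P` is nonconstant and `P² - k Q²` is a constant `m`, then `m = 0`:
differentiating gives `m P' = k Q (Q' P - Q P')`, impossible by degrees unless `m = 0`. Hence
`x0² = a² + 4` in `ℤ[i]`; then `(x0 - a)(x0 + a) = 4` bounds the norms of `x0` and `a`, and a
finite search leaves `x0 = 0`, `a = ±2i`.
-/

open Polynomial

namespace Polynomial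

variable {R : Type*} [CommRing R] [IsDomain R] [CharZero R]

theorem eq_zero_of_sq_eq_C_mul_sq_add_C {P Q : R[X]} {k m : R} (hP : 0 < P.natDegree)
    (h : P ^ 2 = C k * Q ^ 2 + C m) : m = 0 := by
  have hk : k ≠ 0 := by
    rintro rfl
    have := congrArg natDegree h
    rw [map_zero, zero_mul, zero_add, natDegree_pow, natDegree_C] at this
    omega
  have hdeg : P.natDegree = Q.natDegree := by
    have := congrArg natDegree h
    rw [natDegree_add_C, natDegree_C_mul hk, natDegree_pow, natDegree_pow] at this
    omega
  have hderiv : P * derivative P = C k * (Q * derivative Q) := by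
    have := congrArg derivative h
    simp only [derivative_add, derivative_C_mul, derivative_sq, derivative_C, add_zero] at this
    exact mul_left_cancel₀ (C_ne_zero.2 two_ne_zero) (by linear_combination this)
  have hwronski : C m * derivative P = C k * Q * (derivative Q * P - Q * derivative P) := by
    linear_combination (-derivative P) * h + P * hderiv
  by_contra hm
  have hP' : derivative P ≠ 0 := fun h' => hP.ne' (derivative_eq_zero.1 h')
  have hlhs : C m * derivative P ≠ 0 := mul_ne_zero (C_ne_zero.2 hm) hP'
  have hlt : (C m * derivative P).natDegree < Q.natDegree := by
    rw [natDegree_C_mul hm, ← hdeg]; exact natDegree_derivative_lt hP.ne'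
  rw [hwronski] at hlhs hlt
  rw [natDegree_mul (left_ne_zero_of_mul hlhs) (right_ne_zero_of_mul hlhs), natDegree_C_mul hk] at hlt
  omega

end Polynomial

namespace GaussianInt

theorem norm_add_norm_le_eight_of_sq_eq_sq_add_four {x a : GaussianInt} (h : x ^ 2 = a ^ 2 + 4) :
    x.norm + a.norm ≤ 8 := by
  have hfac : (x - a) * (x + a) = 4 := by linear_combination h
  have hne : (x - a) * (x + a) ≠ 0 := hfac ▸ by decide
  have hprod : (x - a).norm * (x + a).norm = 16 := by rw [← Zsqrtd.norm_mul, hfac]; rfl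
  have hpos₁ : 0 < (x - a).norm := norm_pos.2 (left_ne_zero_of_mul hne)
  have hpos₂ : 0 < (x + a).norm := norm_pos.2 (right_ne_zero_of_mul hne)
  have hpar : (x - a).norm + (x + a).norm = 2 * (x.norm + a.norm) := by
    simp only [Zsqrtd.norm_def, Zsqrtd.re_sub, Zsqrtd.im_sub, Zsqrtd.re_add, Zsqrtd.im_add]; ring
  nlinarith

theorem eq_zero_and_sq_eq_neg_four_of_sq_eq_sq_add_four {x a : GaussianInt} (ha : a ≠ 0)
    (h : x ^ 2 = a ^ 2 + 4) : x = 0 ∧ a ^ 2 = -4 := by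
  have hbound := norm_add_norm_le_eight_of_sq_eq_sq_add_four h
  have hre := congrArg Zsqrtd.re h
  have him := congrArg Zsqrtd.im h
  obtain ⟨p, q⟩ := x
  obtain ⟨u, v⟩ := a
  have huv : u ≠ 0 ∨ v ≠ 0 := by
    by_contra! h0; exact ha (by rw [h0.1, h0.2]; rfl)
  simp only [Zsqrtd.norm_def] at hbound
  simp only [sq, Zsqrtd.re_mul, Zsqrtd.im_mul, Zsqrtd.re_add, Zsqrtd.im_add, Zsqrtd.re_ofNat,
    Zsqrtd.im_ofNat] at hre him
  suffices p = 0 ∧ q = 0 ∧ u = 0 ∧ v * v = 4 by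
    obtain ⟨rfl, rfl, rfl, hv⟩ := this
    refine ⟨rfl, Zsqrtd.ext ?_ ?_⟩ <;> simp [sq, hv]
  obtain ⟨hp₁, hp₂⟩ : -2 ≤ p ∧ p ≤ 2 := by
    constructor <;>
      nlinarith [mul_self_nonneg p, mul_self_nonneg q, mul_self_nonneg u, mul_self_nonneg v]
  obtain ⟨hq₁, hq₂⟩ : -2 ≤ q ∧ q ≤ 2 := by
    constructor <;>
      nlinarith [mul_self_nonneg p, mul_self_nonneg q, mul_self_nonneg u, mul_self_nonneg v]
  obtain ⟨hu₁, hu₂⟩ : -2 ≤ u ∧ u ≤ 2 := by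
    constructor <;>
      nlinarith [mul_self_nonneg p, mul_self_nonneg q, mul_self_nonneg u, mul_self_nonneg v]
  obtain ⟨hv₁, hv₂⟩ : -2 ≤ v ∧ v ≤ 2 := by
    constructor <;>
      nlinarith [mul_self_nonneg p, mul_self_nonneg q, mul_self_nonneg u, mul_self_nonneg v]
  clear h ha hbound
  interval_cases p <;> interval_cases q <;> interval_cases u <;> interval_cases v <;> omega

end GaussianInt

theorem alpha_zero_constant_solution_general
    (a c s : GaussianInt[X])
    (ha : a ≠ 0)
    (hs : a * c + 4 = s ^ 2)
    (hα : a.natDegree = 0)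
    (z0 x0 : GaussianInt[X])
    (hz0 : a * z0 ^ 2 - c * x0 ^ 2 = 4 * (a - c))
    (hx0const : x0.natDegree = 0)
    (hz0nonconst : 0 < z0.natDegree) :
    x0 ^ 2 = a ^ 2 + 4 ∧ z0 ^ 2 = a * c + 4 ∧ x0 = 0 ∧ a ^ 2 = -4 := by
  obtain ⟨a₀, rfl⟩ : ∃ a₀, a = C a₀ := ⟨_, eq_C_of_natDegree_eq_zero hα⟩
  obtain ⟨ξ, rfl⟩ : ∃ ξ, x0 = C ξ := ⟨_, eq_C_of_natDegree_eq_zero hx0const⟩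
  have ha₀ : a₀ ≠ 0 := C_ne_zero.1 ha
  have hpell : (C a₀ * z0) ^ 2 = C (ξ ^ 2 - 4) * s ^ 2 + C (4 * (a₀ ^ 2 - ξ ^ 2 + 4)) := by
    simp only [map_sub, map_mul, map_add, map_pow, map_ofNat]
    linear_combination C a₀ * hz0 + (C ξ ^ 2 - 4) * hs
  have hξ : ξ ^ 2 = a₀ ^ 2 + 4 := by
    have h4 := eq_zero_of_sq_eq_C_mul_sq_add_C (by rwa [natDegree_C_mul ha₀]) hpell
    linear_combination -(mul_eq_zero.1 h4).resolve_left (by decide)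
  obtain ⟨rfl, ha₀sq⟩ := GaussianInt.eq_zero_and_sq_eq_neg_four_of_sq_eq_sq_add_four ha₀ hξ
  have haSq : C a₀ ^ 2 = -4 := by rw [← map_pow, ha₀sq, map_neg, map_ofNat]
  rw [map_zero] at hz0 ⊢
  refine ⟨by simp [haSq], mul_left_cancel₀ ha ?_, rfl, haSq⟩
  linear_combination hz0 - c * haSq

/-- If α = 0, x0 is constant and z0 is not, then x0² = a² + 4, z0² = ac + 4,
x0 = 0 and a = ±2i. -/
theorem alpha_zero_constant_solution
    (a b c r s t : GaussianInt[X])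
    (ha : a ≠ 0) (hb : b ≠ 0) (hc : c ≠ 0)
    (hab : a ≠ b) (hac : a ≠ c) (hbc : b ≠ c)
    (hr : a * b + 4 = r ^ 2) (hs : a * c + 4 = s ^ 2) (ht : b * c + 4 = t ^ 2)
    (hαβ : a.natDegree ≤ b.natDegree) (hβγ : b.natDegree ≤ c.natDegree)
    (hβ : 0 < b.natDegree) (hγ : 0 < c.natDegree)
    (hα : a.natDegree = 0)
    (z0 x0 : GaussianInt[X])
    (hz0 : a * z0 ^ 2 - c * x0 ^ 2 = 4 * (a - c))
    (hx0const : x0.natDegree = 0)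
    (hz0nonconst : 0 < z0.natDegree) :
    x0 ^ 2 = a ^ 2 + 4 ∧ z0 ^ 2 = a * c + 4 ∧ x0 = 0 ∧ a ^ 2 = -4 :=
  alpha_zero_constant_solution_general a c s ha hs hα z0 x0 hz0 hx0const hz0nonconst
end

section
/- Let ε ∈ {1, −1} and let d, u, v, w ∈ ℤ[i][X] satisfy 2*d = 2*(a + b + c) + a*b*c + ε*r*s*t, 2*u = a*t + ε*r*s, 2*v = b*s + ε*r*t and 2*w = c*r + ε*s*t. Then: 2*c = 2*(a + b + d) + a*b*d − ε*r*u*v; d = a + b − c + r*w; d = a − b + c + s*v; and d = −a + b + c + t*u. -/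
open Polynomial

/-!
All four identities are polynomial consequences of the defining equations of `d`, `u`, `v`, `w`,
of `ab + 4 = r²`, `ac + 4 = s²`, `bc + 4 = t²` and of `ε² = 1`, once the factors of `2` are
cancelled.
The three linear ones are a single identity read along the three symmetries of the triple.
-/

section RegularExtension

variable {R : Type*} [CommRing R] [IsDomain R]

theorem eq_add_sub_add_mul_of_two_mul_eq {x y z p q q' ε d w : R} (h2 : (2 : R) ≠ 0)
    (hp : x * y + 4 = p ^ 2)
    (hd : 2 * d = 2 * (x + y + z) + x * y * z + ε * (p * q * q'))
    (hw : 2 * w = z * p + ε * (q * q')) :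
    d = x + y - z + p * w :=
  mul_left_cancel₀ h2 <| by linear_combination hd - p * hw + z * hp

/-- `c` is in turn the regular extension of `{a, b, d}` with sign `-ε`, `u` and `v` playing
the roles of `s` and `t`. -/
theorem two_mul_eq_of_regular_extension {a b c r s t ε d u v : R} (h2 : (2 : R) ≠ 0)
    (hε : ε ^ 2 = 1)
    (hr : a * b + 4 = r ^ 2) (hs : a * c + 4 = s ^ 2) (ht : b * c + 4 = t ^ 2)
    (hd : 2 * d = 2 * (a + b + c) + a * b * c + ε * (r * s * t))
    (hu : 2 * u = a * t + ε * (r * s))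
    (hv : 2 * v = b * s + ε * (r * t)) :
    2 * c = 2 * (a + b + d) + a * b * d - ε * (r * u * v) :=
  mul_left_cancel₀ h2 <| mul_left_cancel₀ h2 <| by
    linear_combination (-4 - 2 * a * b) * hd + (2 * ε * r * v) * hu
      + (ε * a * r * t + ε ^ 2 * r ^ 2 * s) * hv
      - (a * t ^ 2 + b * s ^ 2 + ε * r * s * t) * hr
      - b * (a * b + 4) * hs - a * (a * b + 4) * ht
      + (a * r ^ 2 * t ^ 2 + b * r ^ 2 * s ^ 2 + ε * r ^ 3 * s * t) * hε

end RegularExtension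

theorem identities_for_regular_extensions_general
    (a b c r s t : GaussianInt[X])
    (hr : a * b + 4 = r ^ 2) (hs : a * c + 4 = s ^ 2) (ht : b * c + 4 = t ^ 2)
    (ε d u v w : GaussianInt[X]) (hε : ε = 1 ∨ ε = -1)
    (hd : 2 * d = 2 * (a + b + c) + a * b * c + ε * (r * s * t))
    (hu : 2 * u = a * t + ε * (r * s))
    (hv : 2 * v = b * s + ε * (r * t))
    (hw : 2 * w = c * r + ε * (s * t)) :
    2 * c = 2 * (a + b + d) + a * b * d - ε * (r * u * v) ∧
    d = a + b - c + r * w ∧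
    d = a - b + c + s * v ∧
    d = -a + b + c + t * u := by
  have h2 : (2 : GaussianInt[X]) ≠ 0 := two_ne_zero
  have hε2 : ε ^ 2 = 1 := by rcases hε with rfl | rfl <;> norm_num
  refine ⟨two_mul_eq_of_regular_extension h2 hε2 hr hs ht hd hu hv,
    eq_add_sub_add_mul_of_two_mul_eq h2 hr hd hw, ?_, ?_⟩
  · linear_combination eq_add_sub_add_mul_of_two_mul_eq (x := a) (y := c) (z := b) (p := s)
      (q := r) (q' := t) (ε := ε) (d := d) (w := v) h2 hs (by linear_combination hd) hv
  · linear_combination eq_add_sub_add_mul_of_two_mul_eq (x := b) (y := c) (z := a) (p := t)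
      (q := r) (q' := s) (ε := ε) (d := d) (w := u) h2 ht (by linear_combination hd)
      (by linear_combination hu)

/-- Identities relating c and d± for a D(4)-triple in ℤ[i][X]. -/
theorem identities_for_regular_extensions
    (a b c r s t : GaussianInt[X])
    (ha : a ≠ 0) (hb : b ≠ 0) (hc : c ≠ 0)
    (hab : a ≠ b) (hac : a ≠ c) (hbc : b ≠ c)
    (hr : a * b + 4 = r ^ 2) (hs : a * c + 4 = s ^ 2) (ht : b * c + 4 = t ^ 2)
    (hαβ : a.natDegree ≤ b.natDegree) (hβγ : b.natDegree ≤ c.natDegree)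
    (hβ : 0 < b.natDegree) (hγ : 0 < c.natDegree)
    (ε d u v w : GaussianInt[X]) (hε : ε = 1 ∨ ε = -1)
    (hd : 2 * d = 2 * (a + b + c) + a * b * c + ε * (r * s * t))
    (hu : 2 * u = a * t + ε * (r * s))
    (hv : 2 * v = b * s + ε * (r * t))
    (hw : 2 * w = c * r + ε * (s * t)) :
    2 * c = 2 * (a + b + d) + a * b * d - ε * (r * u * v) ∧
    d = a + b - c + r * w ∧
    d = a - b + c + s * v ∧
    d = -a + b + c + t * u :=
  identities_for_regular_extensions_general a b c r s t hr hs ht ε d u v w hε hd hu hv hw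
end

section
/- Either c = a + b + 2*r, or c = a + b − 2*r, or γ ≥ α + β. -/
/-!
The two polynomials `abc + 2(a + b + c) ± rst` (twice the regular extensions `d₊`, `d₋` of the
triple) have product `4 (c - a - b - 2r)(c - a - b + 2r)`, of degree at most `2γ` unless
`c = a + b ± 2r`, while their sum `2abc + 4(a + b + c)` has degree `α + β + γ`. Since the degree
of a sum of nonzero polynomials is at most the degree of their product, `α + β + γ ≤ 2γ`.
-/

open Polynomial

theorem regular_extension_mul_eq {R : Type*} [CommRing R] {a b c r s t : R}
    (hr : a * b + 4 = r ^ 2) (hs : a * c + 4 = s ^ 2) (ht : b * c + 4 = t ^ 2) :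
    (a * b * c + 2 * (a + b + c) + r * s * t) * (a * b * c + 2 * (a + b + c) - r * s * t) =
      4 * ((c - a - b - 2 * r) * (c - a - b + 2 * r)) := by
  linear_combination (s ^ 2 * t ^ 2 - 16) * hr + (a * b + 4) * t ^ 2 * hs +
    (a * b + 4) * (a * c + 4) * ht

namespace Polynomial

variable {R : Type*} [CommRing R] [IsDomain R]

theorem natDegree_add_le_natDegree_mul {p q : R[X]} (hp : p ≠ 0) (hq : q ≠ 0) :
    (p + q).natDegree ≤ (p * q).natDegree := by
  rw [natDegree_mul hp hq]
  exact (natDegree_add_le p q).trans (max_le le_self_add le_add_self)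

theorem two_mul_natDegree_le_of_mul_add_four_eq_sq {a b r : R[X]} (hr : a * b + 4 = r ^ 2) :
    2 * r.natDegree ≤ a.natDegree + b.natDegree := by
  rw [← natDegree_pow, ← hr]
  compute_degree

theorem natDegree_two_mul_mul_mul_add_four_mul [NeZero (2 : R)] {a b c : R[X]}
    (ha : a ≠ 0) (hb : b ≠ 0) (hc : c ≠ 0) (hab : 0 < a.natDegree + b.natDegree)
    (hac : a.natDegree ≤ c.natDegree) (hbc : b.natDegree ≤ c.natDegree) :
    (2 * (a * b * c) + 4 * (a + b + c)).natDegree = a.natDegree + b.natDegree + c.natDegree := by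
  have h2 : (2 : R[X]) ≠ 0 := by simpa only [map_ofNat] using C_ne_zero.2 (two_ne_zero : (2 : R) ≠ 0)
  have hlead : (2 * (a * b * c)).natDegree = a.natDegree + b.natDegree + c.natDegree := by
    rw [natDegree_mul h2 (by positivity), natDegree_mul (mul_ne_zero ha hb) hc,
      natDegree_mul ha hb, natDegree_ofNat, zero_add]
  have hlow : (4 * (a + b + c)).natDegree ≤ c.natDegree := by
    compute_degree
    omega
  rw [natDegree_add_eq_left_of_natDegree_lt (by omega), hlead]

end Polynomial

theorem gap_principle_for_triples_general
    (a b c r s t : GaussianInt[X])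
    (ha : a ≠ 0) (hb : b ≠ 0) (hc : c ≠ 0)
    (hr : a * b + 4 = r ^ 2) (hs : a * c + 4 = s ^ 2) (ht : b * c + 4 = t ^ 2)
    (hαβ : a.natDegree ≤ b.natDegree) (hβγ : b.natDegree ≤ c.natDegree)
    (hβ : 0 < b.natDegree) :
    c = a + b + 2 * r ∨ c = a + b - 2 * r ∨
      a.natDegree + b.natDegree ≤ c.natDegree := by
  by_cases hplus : c = a + b + 2 * r
  · exact Or.inl hplus
  by_cases hminus : c = a + b - 2 * r
  · exact Or.inr (Or.inl hminus)
  refine Or.inr (Or.inr ?_)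
  have hrc : r.natDegree ≤ c.natDegree := by
    have := two_mul_natDegree_le_of_mul_add_four_eq_sq hr
    omega
  have hdeg : (4 * ((c - a - b - 2 * r) * (c - a - b + 2 * r))).natDegree ≤ 2 * c.natDegree := by
    compute_degree
    omega
  have hne : (4 : GaussianInt[X]) * ((c - a - b - 2 * r) * (c - a - b + 2 * r)) ≠ 0 :=
    mul_ne_zero (by norm_num) <| mul_ne_zero
      (fun h => hplus (by linear_combination h)) (fun h => hminus (by linear_combination h))
  rw [← regular_extension_mul_eq hr hs ht] at hdeg hne
  set e := a * b * c + 2 * (a + b + c)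
  have hsum : e + r * s * t + (e - r * s * t) = 2 * (a * b * c) + 4 * (a + b + c) := by ring
  have hle := natDegree_add_le_natDegree_mul (left_ne_zero_of_mul hne) (right_ne_zero_of_mul hne)
  rw [hsum, natDegree_two_mul_mul_mul_add_four_mul ha hb hc (by omega) (by omega) hβγ] at hle
  omega

/-- Gap principle: either c = a + b ± 2r or γ ≥ α + β. -/
theorem gap_principle_for_triples
    (a b c r s t : GaussianInt[X])
    (ha : a ≠ 0) (hb : b ≠ 0) (hc : c ≠ 0)
    (hab : a ≠ b) (hac : a ≠ c) (hbc : b ≠ c)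
    (hr : a * b + 4 = r ^ 2) (hs : a * c + 4 = s ^ 2) (ht : b * c + 4 = t ^ 2)
    (hαβ : a.natDegree ≤ b.natDegree) (hβγ : b.natDegree ≤ c.natDegree)
    (hβ : 0 < b.natDegree) (hγ : 0 < c.natDegree) :
    c = a + b + 2 * r ∨ c = a + b - 2 * r ∨
      a.natDegree + b.natDegree ≤ c.natDegree :=
  gap_principle_for_triples_general a b c r s t ha hb hc hr hs ht hαβ hβγ hβ
end

section
/- Let d1, d2 ∈ ℤ[i][X] satisfy 2*d1 = 2*(a + b + c) + a*b*c + r*s*t and 2*d2 = 2*(a + b + c) + a*b*c − r*s*t, and assume deg(d1) ≤ deg(d2) (so d1 = d₋ and d2 = d₊). Then d2 ≠ 0 with deg(d2) = α + β + γ, and either d1 = 0 or deg(d1) + α + β = γ (in particular deg(d1) < γ). -/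
/-! Since `d₊ + d₋ = 2(a + b + c) + abc` has degree `α + β + γ` (the term `abc` dominates because
`β > 0`) while `deg (rst) ≤ α + β + γ`, the summand of larger degree, `d₊`, has degree exactly
`α + β + γ`. Expanding `(2d₊)(2d₋)` with the three square relations gives
`d₊ d₋ = (c - a - b)² - (2r)²`, of degree at most `2γ`, and exactly `2γ` when `β < γ`. Comparing
degrees gives `deg d₋ + α + β = γ`; when `β = γ` the upper bound alone forces `deg d₋ = α = 0`. -/

open Polynomial

namespace Polynomial

variable {R : Type*} [CommRing R] [IsDomain R]

theorem natDegree_two_mul [CharZero R] (p : R[X]) : (2 * p).natDegree = p.natDegree := by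
  rcases eq_or_ne p 0 with rfl | hp
  · rw [mul_zero]
  · rw [natDegree_mul two_ne_zero hp, natDegree_ofNat, zero_add]

theorem two_mul_natDegree_le_of_add_eq_sq {p q r : R[X]} (hq : q.natDegree = 0)
    (h : p + q = r ^ 2) : 2 * r.natDegree ≤ p.natDegree := by
  rw [← natDegree_pow, ← h]
  exact (natDegree_add_le p q).trans (by rw [hq, max_eq_left (Nat.zero_le _)])

end Polynomial

namespace DiophantineTriple

variable {R : Type*} [CommRing R] [IsDomain R] {a b c r s t d₁ d₂ : R[X]}

theorem add_eq [CharZero R] (hd₁ : 2 * d₁ = 2 * (a + b + c) + a * b * c + r * s * t)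
    (hd₂ : 2 * d₂ = 2 * (a + b + c) + a * b * c - r * s * t) :
    d₁ + d₂ = 2 * (a + b + c) + a * b * c :=
  mul_left_cancel₀ two_ne_zero (by linear_combination hd₁ + hd₂)

theorem mul_eq [CharZero R]
    (hr : a * b + 4 = r ^ 2) (hs : a * c + 4 = s ^ 2) (ht : b * c + 4 = t ^ 2)
    (hd₁ : 2 * d₁ = 2 * (a + b + c) + a * b * c + r * s * t)
    (hd₂ : 2 * d₂ = 2 * (a + b + c) + a * b * c - r * s * t) :
    d₁ * d₂ = (c - a - b) ^ 2 - (2 * r) ^ 2 := by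
  refine mul_left_cancel₀ (mul_ne_zero two_ne_zero two_ne_zero : (2 * 2 : R[X]) ≠ 0) ?_
  linear_combination (2 * d₂) * hd₁ + (2 * (a + b + c) + a * b * c + r * s * t) * hd₂
    + ((a * c + 4) * (b * c + 4) - 16) * hr + r ^ 2 * (b * c + 4) * hs + r ^ 2 * s ^ 2 * ht

theorem natDegree_mul_mul_le (hr : a * b + 4 = r ^ 2) (hs : a * c + 4 = s ^ 2)
    (ht : b * c + 4 = t ^ 2) :
    (r * s * t).natDegree ≤ a.natDegree + b.natDegree + c.natDegree := by
  have hr' := two_mul_natDegree_le_of_add_eq_sq (natDegree_ofNat 4) hr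
  have hs' := two_mul_natDegree_le_of_add_eq_sq (natDegree_ofNat 4) hs
  have ht' := two_mul_natDegree_le_of_add_eq_sq (natDegree_ofNat 4) ht
  have hab := natDegree_mul_le (p := a) (q := b)
  have hac := natDegree_mul_le (p := a) (q := c)
  have hbc := natDegree_mul_le (p := b) (q := c)
  have hrs := natDegree_mul_le (p := r) (q := s)
  have hrst := natDegree_mul_le (p := r * s) (q := t)
  omega

theorem natDegree_add_eq [CharZero R] (ha : a ≠ 0) (hb : b ≠ 0) (hc : c ≠ 0)
    (hαβ : a.natDegree ≤ b.natDegree) (hβγ : b.natDegree ≤ c.natDegree) (hβ : 0 < b.natDegree)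
    (hd₁ : 2 * d₁ = 2 * (a + b + c) + a * b * c + r * s * t)
    (hd₂ : 2 * d₂ = 2 * (a + b + c) + a * b * c - r * s * t) :
    (d₁ + d₂).natDegree = a.natDegree + b.natDegree + c.natDegree := by
  have habc : (a * b * c).natDegree = a.natDegree + b.natDegree + c.natDegree := by
    rw [natDegree_mul (mul_ne_zero ha hb) hc, natDegree_mul ha hb]
  have hlin : (2 * (a + b + c)).natDegree < (a * b * c).natDegree := by
    rw [natDegree_two_mul, habc]
    exact (natDegree_add_le_of_degree_le
      (natDegree_add_le_of_degree_le (hαβ.trans hβγ) hβγ) le_rfl).trans_lt (by omega)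
  rw [add_eq hd₁ hd₂, natDegree_add_eq_right_of_natDegree_lt hlin, habc]

theorem natDegree_d_plus [CharZero R] (ha : a ≠ 0) (hb : b ≠ 0) (hc : c ≠ 0)
    (hr : a * b + 4 = r ^ 2) (hs : a * c + 4 = s ^ 2) (ht : b * c + 4 = t ^ 2)
    (hαβ : a.natDegree ≤ b.natDegree) (hβγ : b.natDegree ≤ c.natDegree) (hβ : 0 < b.natDegree)
    (hd₁ : 2 * d₁ = 2 * (a + b + c) + a * b * c + r * s * t)
    (hd₂ : 2 * d₂ = 2 * (a + b + c) + a * b * c - r * s * t)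
    (hdeg : d₁.natDegree ≤ d₂.natDegree) :
    d₂.natDegree = a.natDegree + b.natDegree + c.natDegree := by
  have hsum := natDegree_add_eq ha hb hc hαβ hβγ hβ hd₁ hd₂
  refine le_antisymm ?_ ?_
  · have h2d₂ : 2 * d₂ = (d₁ + d₂) - r * s * t := by rw [hd₂, add_eq hd₁ hd₂]
    rw [← natDegree_two_mul, h2d₂]
    exact (natDegree_sub_le _ _).trans (max_le hsum.le (natDegree_mul_mul_le hr hs ht))
  · calc a.natDegree + b.natDegree + c.natDegree = (d₁ + d₂).natDegree := hsum.symm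
      _ ≤ max d₁.natDegree d₂.natDegree := natDegree_add_le _ _
      _ = d₂.natDegree := max_eq_right hdeg

theorem natDegree_two_mul_sq_le [CharZero R] (hr : a * b + 4 = r ^ 2) :
    ((2 * r) ^ 2).natDegree ≤ a.natDegree + b.natDegree := by
  rw [natDegree_pow, natDegree_two_mul]
  exact (two_mul_natDegree_le_of_add_eq_sq (natDegree_ofNat 4) hr).trans natDegree_mul_le

theorem natDegree_sq_sub_sq_le [CharZero R] (hr : a * b + 4 = r ^ 2)
    (hαβ : a.natDegree ≤ b.natDegree) (hβγ : b.natDegree ≤ c.natDegree) :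
    ((c - a - b) ^ 2 - (2 * r) ^ 2).natDegree ≤ 2 * c.natDegree := by
  have hw : (c - a - b).natDegree ≤ c.natDegree := by
    have := natDegree_sub_le c a
    have := natDegree_sub_le (c - a) b
    omega
  have h2r := natDegree_two_mul_sq_le hr
  refine (natDegree_sub_le _ _).trans (max_le ?_ (by omega))
  rw [natDegree_pow]
  omega

theorem natDegree_sq_sub_sq_of_lt [CharZero R] (hr : a * b + 4 = r ^ 2)
    (hαβ : a.natDegree ≤ b.natDegree) (hβγ : b.natDegree < c.natDegree) :
    ((c - a - b) ^ 2 - (2 * r) ^ 2).natDegree = 2 * c.natDegree := by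
  have hca : (c - a).natDegree = c.natDegree :=
    natDegree_sub_eq_left_of_natDegree_lt (by omega)
  have hw : ((c - a - b) ^ 2).natDegree = 2 * c.natDegree := by
    rw [natDegree_pow, natDegree_sub_eq_left_of_natDegree_lt (by omega), hca]
  have h2r := natDegree_two_mul_sq_le hr
  rw [natDegree_sub_eq_left_of_natDegree_lt (by omega), hw]

theorem natDegree_d_minus [CharZero R]
    (hr : a * b + 4 = r ^ 2) (hs : a * c + 4 = s ^ 2) (ht : b * c + 4 = t ^ 2)
    (hαβ : a.natDegree ≤ b.natDegree) (hβγ : b.natDegree ≤ c.natDegree)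
    (hd₁ : 2 * d₁ = 2 * (a + b + c) + a * b * c + r * s * t)
    (hd₂ : 2 * d₂ = 2 * (a + b + c) + a * b * c - r * s * t)
    (hd₁0 : d₁ ≠ 0) (hd₂0 : d₂ ≠ 0)
    (hd₂deg : d₂.natDegree = a.natDegree + b.natDegree + c.natDegree) :
    d₁.natDegree + a.natDegree + b.natDegree = c.natDegree := by
  have hprod : d₁.natDegree + d₂.natDegree = ((c - a - b) ^ 2 - (2 * r) ^ 2).natDegree := by
    rw [← natDegree_mul hd₁0 hd₂0, mul_eq hr hs ht hd₁ hd₂]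
  rcases hβγ.lt_or_eq with hlt | heq
  · rw [natDegree_sq_sub_sq_of_lt hr hαβ hlt] at hprod
    omega
  · have := natDegree_sq_sub_sq_le hr hαβ hβγ
    omega

end DiophantineTriple

theorem degrees_of_d_plus_minus_general
    (a b c r s t : GaussianInt[X])
    (ha : a ≠ 0) (hb : b ≠ 0) (hc : c ≠ 0)
    (hr : a * b + 4 = r ^ 2) (hs : a * c + 4 = s ^ 2) (ht : b * c + 4 = t ^ 2)
    (hαβ : a.natDegree ≤ b.natDegree) (hβγ : b.natDegree ≤ c.natDegree)
    (hβ : 0 < b.natDegree)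
    (d1 d2 : GaussianInt[X])
    (hd1 : 2 * d1 = 2 * (a + b + c) + a * b * c + r * s * t)
    (hd2 : 2 * d2 = 2 * (a + b + c) + a * b * c - r * s * t)
    (hdeg : d1.natDegree ≤ d2.natDegree) :
    d2 ≠ 0 ∧ d2.natDegree = a.natDegree + b.natDegree + c.natDegree ∧
      (d1 = 0 ∨ d1.natDegree + a.natDegree + b.natDegree = c.natDegree) := by
  have hd2deg := DiophantineTriple.natDegree_d_plus ha hb hc hr hs ht hαβ hβγ hβ hd1 hd2 hdeg
  have hd2ne : d2 ≠ 0 := ne_zero_of_natDegree_gt (n := 0) (by omega)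
  refine ⟨hd2ne, hd2deg, or_iff_not_imp_left.2 fun hd1ne => ?_⟩
  exact DiophantineTriple.natDegree_d_minus hr hs ht hαβ hβγ hd1 hd2 hd1ne hd2ne hd2deg

/-- Degrees of d₊ and d₋ for a D(4)-triple in ℤ[i][X]. -/
theorem degrees_of_d_plus_minus
    (a b c r s t : GaussianInt[X])
    (ha : a ≠ 0) (hb : b ≠ 0) (hc : c ≠ 0)
    (hab : a ≠ b) (hac : a ≠ c) (hbc : b ≠ c)
    (hr : a * b + 4 = r ^ 2) (hs : a * c + 4 = s ^ 2) (ht : b * c + 4 = t ^ 2)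
    (hαβ : a.natDegree ≤ b.natDegree) (hβγ : b.natDegree ≤ c.natDegree)
    (hβ : 0 < b.natDegree) (hγ : 0 < c.natDegree)
    (d1 d2 : GaussianInt[X])
    (hd1 : 2 * d1 = 2 * (a + b + c) + a * b * c + r * s * t)
    (hd2 : 2 * d2 = 2 * (a + b + c) + a * b * c - r * s * t)
    (hdeg : d1.natDegree ≤ d2.natDegree) :
    d2 ≠ 0 ∧ d2.natDegree = a.natDegree + b.natDegree + c.natDegree ∧
      (d1 = 0 ∨ d1.natDegree + a.natDegree + b.natDegree = c.natDegree) :=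
  degrees_of_d_plus_minus_general a b c r s t ha hb hc hr hs ht hαβ hβγ hβ d1 d2 hd1 hd2 hdeg
end

section
/- If there exist nonnegative integers m, n with v_{2m} = w_{2n}, then z0 = z1. -/
open Polynomial

/-!
Modulo `c` we have `s² ≡ 4` and `2 v₁ ≡ s v₀`, so the recurrence gives `2ᵏ vₖ ≡ sᵏ v₀`; for even
`k = 2m` this reads `2^(2m) v_{2m} ≡ 4^m z0 = 2^(2m) z0`. The same holds for `w` and `z1`, so
`v_{2m} = w_{2n}` makes `c` divide a nonzero constant times `z0 - z1`. The degree bounds give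
`deg z0, deg z1 < deg c`, hence `z0 = z1`.
-/

theorem two_pow_mul_eq_pow_mul_of_sq_eq_four {R : Type*} [CommRing R] {s : R} {v : ℕ → R}
    (hs : s ^ 2 = 4) (hv1 : 2 * v 1 = s * v 0) (hvrec : ∀ k, v (k + 2) = s * v (k + 1) - v k) :
    ∀ k, 2 ^ k * v k = s ^ k * v 0
  | 0 => by simp
  | 1 => by simpa using hv1
  | k + 2 => by
    have ih₀ := two_pow_mul_eq_pow_mul_of_sq_eq_four hs hv1 hvrec k
    have ih₁ := two_pow_mul_eq_pow_mul_of_sq_eq_four hs hv1 hvrec (k + 1)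
    rw [hvrec]
    linear_combination (2 * s) * ih₁ - 4 * ih₀ + s ^ k * v 0 * hs

theorem dvd_two_pow_mul_sub_of_dvd {R : Type*} [CommRing R] {c s : R} {v : ℕ → R}
    (hs : c ∣ s ^ 2 - 4) (hv1 : c ∣ 2 * v 1 - s * v 0)
    (hvrec : ∀ k, v (k + 2) = s * v (k + 1) - v k) (m : ℕ) :
    c ∣ 2 ^ (2 * m) * (v (2 * m) - v 0) := by
  set π := Ideal.Quotient.mk (Ideal.span {c})
  have hs' : π s ^ 2 = 4 := by
    have := (Ideal.Quotient.eq_zero_iff_dvd c _).2 hs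
    rwa [map_sub, map_pow, map_ofNat, sub_eq_zero] at this
  have hv1' : 2 * π (v 1) = π s * π (v 0) := by
    have := (Ideal.Quotient.eq_zero_iff_dvd c _).2 hv1
    rwa [map_sub, map_mul, map_mul, map_ofNat, sub_eq_zero] at this
  have hmod := two_pow_mul_eq_pow_mul_of_sq_eq_four (v := fun k => π (v k)) hs' hv1'
    (fun k => by simp only [hvrec, map_sub, map_mul]) (2 * m)
  have hpow : π s ^ (2 * m) = 2 ^ (2 * m) := by
    rw [pow_mul, hs', pow_mul]; norm_num
  rw [← Ideal.Quotient.eq_zero_iff_dvd, map_mul, map_sub, map_pow, map_ofNat]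
  linear_combination hmod + π (v 0) * hpow

theorem Polynomial.eq_of_dvd_C_mul_sub {R : Type*} [Ring R] [NoZeroDivisors R] {c p q : R[X]}
    {k : R} (hk : k ≠ 0) (hc : c ∣ C k * (p - q)) (hp : p.natDegree < c.natDegree)
    (hq : q.natDegree < c.natDegree) : p = q := by
  have hdeg : (C k * (p - q)).natDegree < c.natDegree := by
    rw [natDegree_C_mul hk]
    exact (natDegree_sub_le p q).trans_lt (max_lt hp hq)
  have hzero := eq_zero_of_dvd_of_natDegree_lt hc hdeg
  exact sub_eq_zero.1 ((mul_eq_zero.1 hzero).resolve_left (C_ne_zero.2 hk))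

theorem even_even_intersection_initial_terms_general
    (a b c s t : GaussianInt[X])
    (hs : a * c + 4 = s ^ 2) (ht : b * c + 4 = t ^ 2)
    (hγ : 0 < c.natDegree)
    (z0 x0 : GaussianInt[X]) (v : ℕ → GaussianInt[X])
    (hz0deg : 4 * z0.natDegree + a.natDegree ≤ 3 * c.natDegree)
    (hv0 : v 0 = z0) (hv1 : 2 * v 1 = s * z0 + c * x0)
    (hvrec : ∀ k, v (k + 2) = s * v (k + 1) - v k)
    (z1 y1 : GaussianInt[X]) (w : ℕ → GaussianInt[X])
    (hz1deg : 4 * z1.natDegree + b.natDegree ≤ 3 * c.natDegree)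
    (hw0 : w 0 = z1) (hw1 : 2 * w 1 = t * z1 + c * y1)
    (hwrec : ∀ k, w (k + 2) = t * w (k + 1) - w k)
    (h : ∃ m n : ℕ, v (2 * m) = w (2 * n)) :
    z0 = z1 := by
  obtain ⟨m, n, hmn⟩ := h
  have hv := dvd_two_pow_mul_sub_of_dvd (c := c) (Dvd.intro_left a (by rw [← hs]; ring))
    (Dvd.intro x0 (by rw [hv0, hv1]; ring)) hvrec m
  have hw := dvd_two_pow_mul_sub_of_dvd (c := c) (Dvd.intro_left b (by rw [← ht]; ring))
    (Dvd.intro y1 (by rw [hw0, hw1]; ring)) hwrec n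
  have hc : c ∣ C (2 ^ (2 * m + 2 * n)) * (z0 - z1) := by
    convert dvd_sub (hw.mul_left (2 ^ (2 * m))) (hv.mul_left (2 ^ (2 * n))) using 1
    rw [map_pow, C_ofNat, ← hv0, ← hw0, hmn]
    ring
  exact eq_of_dvd_C_mul_sub (pow_ne_zero _ two_ne_zero) hc (by omega) (by omega)

/-- If v_{2m} = w_{2n} for some m, n then z0 = z1. -/
theorem even_even_intersection_initial_terms
    (a b c r s t : GaussianInt[X])
    (ha : a ≠ 0) (hb : b ≠ 0) (hc : c ≠ 0)
    (hab : a ≠ b) (hac : a ≠ c) (hbc : b ≠ c)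
    (hr : a * b + 4 = r ^ 2) (hs : a * c + 4 = s ^ 2) (ht : b * c + 4 = t ^ 2)
    (hαβ : a.natDegree ≤ b.natDegree) (hβγ : b.natDegree ≤ c.natDegree)
    (hβ : 0 < b.natDegree) (hγ : 0 < c.natDegree)
    (z0 x0 d0 : GaussianInt[X]) (v : ℕ → GaussianInt[X])
    (hz0 : a * z0 ^ 2 - c * x0 ^ 2 = 4 * (a - c))
    (hz0deg : 4 * z0.natDegree + a.natDegree ≤ 3 * c.natDegree)
    (hx0deg : 4 * x0.natDegree ≤ a.natDegree + c.natDegree)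
    (hd0c : c * d0 + 4 = z0 ^ 2) (hd0a : a * d0 + 4 = x0 ^ 2)
    (hv0 : v 0 = z0) (hv1 : 2 * v 1 = s * z0 + c * x0)
    (hvrec : ∀ k, v (k + 2) = s * v (k + 1) - v k)
    (z1 y1 d1 : GaussianInt[X]) (w : ℕ → GaussianInt[X])
    (hz1 : b * z1 ^ 2 - c * y1 ^ 2 = 4 * (b - c))
    (hz1deg : 4 * z1.natDegree + b.natDegree ≤ 3 * c.natDegree)
    (hy1deg : 4 * y1.natDegree ≤ b.natDegree + c.natDegree)
    (hd1c : c * d1 + 4 = z1 ^ 2) (hd1b : b * d1 + 4 = y1 ^ 2)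
    (hw0 : w 0 = z1) (hw1 : 2 * w 1 = t * z1 + c * y1)
    (hwrec : ∀ k, w (k + 2) = t * w (k + 1) - w k)
    (h : ∃ m n : ℕ, v (2 * m) = w (2 * n)) :
    z0 = z1 :=
  even_even_intersection_initial_terms_general a b c s t hs ht hγ z0 x0 v hz0deg hv0 hv1 hvrec z1 y1
    w hz1deg hw0 hw1 hwrec h
end
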